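/- arXiv:1307.4670 — 7 statements merged into one kernel-verified Lean document; each statement's English description precedes it below -/
import Mathlib

section
/- Let A be a real symmetric n×n matrix, S an n×m matrix with SᵀS = I, and B = SᵀAS with eigenvalues μ₁ ≥ ⋯ ≥ μₘ interlacing those of A (λ₁ ≥ ⋯ ≥ λₙ). If the interlacing is tight, i.e., there exists 0 ≤ k ≤ m with λᵢ = μᵢ for i = 1,…,k and μᵢ = λ_{n-m+i} for i = k+1,…,m, then SB = AS. -/
open Matrix Finset

/-!
Diagonalise `A = U diag(λ) Uᵀ` and `B = V diag(μ) Vᵀ` with orthogonal `U`, `V`, and put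
`W = Uᵀ S V`. The columns `w_i` of `W` are orthonormal and `∑ⱼ λⱼ wᵢⱼ² = μᵢ`, and
`SB = AS` follows from `diag(λ) W = W diag(μ)`, i.e. from each `w_i` being supported on
`{j | λⱼ = μᵢ}`.

For the top part (`μᵢ = λᵢ`, `i < k`) this follows by strong induction on `i`. The indices
`G = {j | λⱼ > λᵢ}` all lie below `i`, and by induction the columns `w_s`, `s ∈ G`, are
`|G|` orthonormal vectors supported on `G`; hence they span all vectors supported on `G`, and
`w_i`, being orthogonal to them, vanishes on `G`. A Rayleigh quotient `∑ λⱼ wᵢⱼ² = λᵢ` with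
all weight on `{λⱼ ≤ λᵢ}` then forces `w_i` onto `{λⱼ = λᵢ}`. The bottom part is the top part
for `-λ` with both index orders reversed.
-/

theorem eq_zero_of_sum_mul_sq_eq {ι : Type*} [Fintype ι] {lam w : ι → ℝ} {c : ℝ}
    (hle : ∀ j, w j ≠ 0 → lam j ≤ c) (heq : ∑ j, lam j * w j ^ 2 = c * ∑ j, w j ^ 2)
    {j : ι} (hj : lam j ≠ c) : w j = 0 := by
  have hterm : ∀ j ∈ univ, 0 ≤ (c - lam j) * w j ^ 2 := fun j _ => by
    by_cases hw : w j = 0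
    · simp [hw]
    · exact mul_nonneg (sub_nonneg.2 (hle j hw)) (sq_nonneg _)
  have hsum : ∑ j, (c - lam j) * w j ^ 2 = 0 := by
    simp only [sub_mul, sum_sub_distrib, ← mul_sum, heq, sub_self]
  have hj0 := (sum_eq_zero_iff_of_nonneg hterm).1 hsum j (mem_univ j)
  exact pow_eq_zero_iff two_ne_zero |>.1 ((mul_eq_zero.1 hj0).resolve_left (sub_ne_zero.2 hj.symm))

theorem eq_zero_of_orthogonal_of_orthonormal_supported {ι : Type*} [Fintype ι] [DecidableEq ι]
    (T : Finset ι) (v : T → ι → ℝ) (hv : ∀ s t, v s ⬝ᵥ v t = if s = t then 1 else 0)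
    (hsupp : ∀ s, ∀ j ∉ T, v s j = 0) {x : ι → ℝ} (hx : ∀ s, v s ⬝ᵥ x = 0)
    {j : ι} (hj : j ∈ T) : x j = 0 := by
  have sum_restrict : ∀ f : ι → ℝ, (∀ j ∉ T, f j = 0) → ∑ u : T, f u = ∑ j, f j := fun f hf =>
    (sum_coe_sort T f).trans (sum_subset (subset_univ T) fun j _ hj => hf j hj)
  let M : Matrix T T ℝ := of fun s u => v s u
  have hM : M * Mᵀ = 1 := by
    ext s t
    rw [mul_apply, one_apply, ← hv s t]
    exact sum_restrict (fun j => v s j * v t j) fun j hj => by simp [hsupp s j hj]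
  have hMx : M *ᵥ (fun u : T => x u) = 0 := by
    funext s
    rw [Pi.zero_apply, ← hx s]
    exact sum_restrict (fun j => v s j * x j) fun j hj => by simp [hsupp s j hj]
  -- `M` is square, so its orthonormal rows are also orthonormal columns.
  have hx0 : (fun u : T => x u) = 0 := by
    calc (fun u : T => x u) = Mᵀ *ᵥ (M *ᵥ fun u : T => x u) := by
          rw [mulVec_mulVec, mul_eq_one_comm.1 hM, one_mulVec]
      _ = 0 := by rw [hMx, mulVec_zero]
  exact congrFun hx0 ⟨j, hj⟩

section TightInterlacing

variable {n m : ℕ} (hm : m ≤ n) {lam : Fin n → ℝ} (hlam : Antitone lam)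
  {W : Matrix (Fin n) (Fin m) ℝ} (hW : Wᵀ * W = 1) {k : ℕ}
include hm hlam hW

theorem column_eq_zero_of_top_tight
    (hray : ∀ i : Fin m, (i : ℕ) < k → ∑ j, lam j * W j i ^ 2 = lam (Fin.castLE hm i)) :
    ∀ i : Fin m, (i : ℕ) < k → ∀ j, lam j ≠ lam (Fin.castLE hm i) → W j i = 0 := by
  intro i
  induction i using WellFoundedLT.induction with
  | _ i IH =>
  intro hik
  set c := lam (Fin.castLE hm i)
  set G := univ.filter fun j => c < lam j
  have hG : ∀ j ∈ G, (j : ℕ) < i := by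
    intro j hj
    by_contra! h
    have := hlam (show Fin.castLE hm i ≤ j from h)
    simp only [G, mem_filter, mem_univ, true_and] at hj
    linarith
  let idx : G → Fin m := fun s => ⟨s, (hG s s.2).trans i.2⟩
  have horth : ∀ a b : Fin m, (fun j => W j a) ⬝ᵥ (fun j => W j b) = if a = b then 1 else 0 :=
    fun a b => by rw [← one_apply, ← hW]; rfl
  have hvanish : ∀ j ∈ G, W j i = 0 := by
    refine fun j hj => eq_zero_of_orthogonal_of_orthonormal_supported G
      (fun s j => W j (idx s)) (x := fun j => W j i) (fun s t => ?_) (fun s j hj => ?_)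
      (fun s => ?_) hj
    · simp only [horth, idx, Subtype.ext_iff, Fin.ext_iff]
    · have hs := hG s s.2
      have hlt : lam j < lam s := by
        have := s.2
        simp only [G, mem_filter, mem_univ, true_and] at hj this
        linarith
      exact IH (idx s) hs (hs.trans hik) j hlt.ne
    · rw [horth, if_neg (Fin.ne_of_lt (hG s s.2))]
  have hnorm : ∑ j, W j i ^ 2 = 1 := by
    simpa [sq, dotProduct] using horth i i
  refine fun j hj => eq_zero_of_sum_mul_sq_eq (w := fun j => W j i) (fun j hw => ?_) ?_ hj
  · by_contra! h
    exact hw (hvanish j (by simpa [G] using h))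
  · rw [hnorm, mul_one]
    exact hray i hik

theorem column_eq_zero_of_bottom_tight
    (hray : ∀ i : Fin m, k ≤ (i : ℕ) →
      ∑ j, lam j * W j i ^ 2 = lam ⟨n - m + (i : ℕ), by have := i.isLt; omega⟩) :
    ∀ i : Fin m, k ≤ (i : ℕ) → ∀ j, lam j ≠ lam ⟨n - m + (i : ℕ), by have := i.isLt; omega⟩ →
      W j i = 0 := by
  have hlam' : Antitone fun j : Fin n => -lam j.rev := fun a b hab =>
    neg_le_neg (hlam (Fin.rev_le_rev.2 hab))
  have hW' : (W.submatrix Fin.rev Fin.rev)ᵀ * W.submatrix Fin.rev Fin.rev = 1 := by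
    change Wᵀ.submatrix Fin.revPerm Fin.revPerm * W.submatrix Fin.revPerm Fin.revPerm = 1
    rw [submatrix_mul_equiv, hW, submatrix_one_equiv]
  have hray' : ∀ i : Fin m, (i : ℕ) < m - k →
      ∑ j, -lam j.rev * W.submatrix Fin.rev Fin.rev j i ^ 2 = -lam (Fin.castLE hm i).rev := by
    intro i hi
    rw [show (Fin.castLE hm i).rev = ⟨n - m + (i.rev : ℕ), by omega⟩ from
        Fin.ext (by simp only [Fin.val_rev, Fin.val_castLE]; omega),
      ← hray i.rev (by simp only [Fin.val_rev]; omega), ← sum_neg_distrib]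
    exact Fintype.sum_equiv Fin.revPerm _ _ fun j => by simp
  intro i hik j hj
  have hj' : -lam j.rev.rev ≠ -lam (Fin.castLE hm i.rev).rev := by
    rwa [show (Fin.castLE hm i.rev).rev = ⟨n - m + (i : ℕ), by omega⟩ from
        Fin.ext (by simp only [Fin.val_rev, Fin.val_castLE]; omega),
      Fin.rev_rev, ne_eq, neg_inj]
  simpa using column_eq_zero_of_top_tight hm hlam' hW' hray' i.rev
    (by simp only [Fin.val_rev]; omega) j.rev hj'

end TightInterlacing

theorem diagonal_mul_eq_mul_diagonal_of_tight {n m : ℕ} (hm : m ≤ n) {lam : Fin n → ℝ}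
    (hlam : Antitone lam) {mu : Fin m → ℝ} {W : Matrix (Fin n) (Fin m) ℝ} (hW : Wᵀ * W = 1)
    (hray : ∀ i, ∑ j, lam j * W j i ^ 2 = mu i) (k : ℕ)
    (htop : ∀ i : Fin m, (i : ℕ) < k → mu i = lam (Fin.castLE hm i))
    (hbot : ∀ i : Fin m, k ≤ (i : ℕ) →
      mu i = lam ⟨n - m + (i : ℕ), by have := i.isLt; omega⟩) :
    diagonal lam * W = W * diagonal mu := by
  ext j i
  rw [diagonal_mul, mul_diagonal]
  by_cases hji : lam j = mu i
  · rw [hji, mul_comm]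
  suffices W j i = 0 by rw [this, mul_zero, zero_mul]
  rcases lt_or_ge (i : ℕ) k with hik | hik
  · rw [htop i hik] at hji
    exact column_eq_zero_of_top_tight hm hlam hW (fun i hi => (hray i).trans (htop i hi))
      i hik j hji
  · rw [hbot i hik] at hji
    exact column_eq_zero_of_bottom_tight hm hlam hW (fun i hi => (hray i).trans (hbot i hi))
      i hik j hji

theorem Matrix.IsHermitian.exists_orthogonal_eq_mul_diagonal_mul_transpose {ι : Type*}
    [Fintype ι] [DecidableEq ι] {A : Matrix ι ι ℝ} (hA : A.IsHermitian) (σ : Equiv.Perm ι) :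
    ∃ U : Matrix ι ι ℝ, U * Uᵀ = 1 ∧ Uᵀ * U = 1 ∧ A = U * diagonal (hA.eigenvalues ∘ σ) * Uᵀ := by
  set Q : Matrix ι ι ℝ := (hA.eigenvectorUnitary : Matrix ι ι ℝ)
  have hQ : Q * Qᵀ = 1 := by
    simpa [Matrix.star_eq_conjTranspose] using (mem_unitaryGroup_iff.1 hA.eigenvectorUnitary.2)
  have hAQ : A = Q * diagonal hA.eigenvalues * Qᵀ := by
    simpa [Matrix.star_eq_conjTranspose, conjTranspose_eq_transpose_of_trivial] using
      hA.spectral_theorem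
  have hU : Q.submatrix id σ * (Q.submatrix id σ)ᵀ = 1 := by
    rw [transpose_submatrix, submatrix_mul_equiv, hQ, submatrix_id_id]
  refine ⟨Q.submatrix id σ, hU, mul_eq_one_comm.1 hU, ?_⟩
  rw [← submatrix_diagonal_equiv, submatrix_mul_equiv, transpose_submatrix, submatrix_mul_equiv,
    submatrix_id_id, ← hAQ]

theorem mul_conj_diagonal_eq_of_diagonal_mul_eq {ι κ R : Type*} [Fintype ι] [Fintype κ]
    [DecidableEq ι] [DecidableEq κ] [Semiring R] {U : Matrix ι ι R} {S : Matrix ι κ R}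
    {V : Matrix κ κ R} {lam : ι → R} {mu : κ → R} (hU : U * Uᵀ = 1) (hV : V * Vᵀ = 1)
    (h : diagonal lam * (Uᵀ * S * V) = Uᵀ * S * V * diagonal mu) :
    S * (V * diagonal mu * Vᵀ) = U * diagonal lam * Uᵀ * S :=
  calc S * (V * diagonal mu * Vᵀ) = U * (Uᵀ * S * V * diagonal mu) * Vᵀ := by
        simp only [← Matrix.mul_assoc, hU, Matrix.one_mul]
    _ = U * (diagonal lam * (Uᵀ * S * V)) * Vᵀ := by rw [h]
    _ = U * diagonal lam * Uᵀ * S := by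
        simp only [← Matrix.mul_assoc]
        rw [Matrix.mul_assoc _ V, hV, Matrix.mul_one]

/-- Tight interlacing implies `SB = AS`. -/
theorem stmt1 (n m : ℕ) (hm : m < n)
    (A : Matrix (Fin n) (Fin n) ℝ) (hA : A.IsHermitian)
    (S : Matrix (Fin n) (Fin m) ℝ) (hS : Sᵀ * S = 1)
    (hB : (Sᵀ * A * S).IsHermitian)
    (lam : Fin n → ℝ) (σ : Equiv.Perm (Fin n))
    (hlam : lam = hA.eigenvalues ∘ σ)
    (hlamAnti : ∀ i j : Fin n, i ≤ j → lam j ≤ lam i)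
    (mu : Fin m → ℝ) (τ : Equiv.Perm (Fin m))
    (hmu : mu = hB.eigenvalues ∘ τ)
    (k : ℕ)
    (htop : ∀ i : Fin m, (i : ℕ) < k → lam ⟨(i : ℕ), lt_trans i.isLt hm⟩ = mu i)
    (hbot : ∀ i : Fin m, k ≤ (i : ℕ) →
      mu i = lam ⟨n - m + (i : ℕ), by have := i.isLt; omega⟩) :
    S * (Sᵀ * A * S) = A * S := by
  obtain ⟨U, hUUt, -, hAU⟩ := hA.exists_orthogonal_eq_mul_diagonal_mul_transpose σ
  obtain ⟨V, hVVt, hVtV, hBV⟩ := hB.exists_orthogonal_eq_mul_diagonal_mul_transpose τ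
  rw [← hlam] at hAU
  rw [← hmu] at hBV
  set W := Uᵀ * S * V
  have hW : Wᵀ * W = 1 :=
    calc Wᵀ * W = Vᵀ * (Sᵀ * (U * Uᵀ) * S) * V := by
          simp only [W, transpose_mul, transpose_transpose, Matrix.mul_assoc]
      _ = 1 := by rw [hUUt, Matrix.mul_one, hS, Matrix.mul_one, hVtV]
  have hWDW : Wᵀ * diagonal lam * W = diagonal mu :=
    calc Wᵀ * diagonal lam * W = Vᵀ * (Sᵀ * (U * diagonal lam * Uᵀ) * S) * V := by
          simp only [W, transpose_mul, transpose_transpose, Matrix.mul_assoc]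
      _ = Vᵀ * V * diagonal mu * (Vᵀ * V) := by rw [← hAU, hBV]; simp only [Matrix.mul_assoc]
      _ = diagonal mu := by rw [hVtV, Matrix.one_mul, Matrix.mul_one]
  have hray : ∀ i, ∑ j, lam j * W j i ^ 2 = mu i := fun i => by
    rw [← diagonal_apply_eq mu i, ← hWDW, mul_apply]
    simp only [mul_diagonal, transpose_apply]
    exact sum_congr rfl fun j _ => by ring
  have hDW := diagonal_mul_eq_mul_diagonal_of_tight hm.le (fun i j h => hlamAnti i j h) hW hray k
    (fun i hi => (htop i hi).symm) hbot
  rw [hBV, mul_conj_diagonal_eq_of_diagonal_mul_eq hUUt hVVt hDW, ← hAU]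
end

section
/- Let G be a connected finite simple graph on n vertices with Laplacian eigenvalues λ₁ ≥ ⋯ ≥ λₙ = 0. For any vertex subset U with |U| = m, 0 < m < n, we have λ₁ + ⋯ + λₘ ≥ (∑_{u∈U} d_u) + |∂(U, Ū)|/(n − m), where d_u is the degree of u and ∂(U, Ū) is the set of edges between U and its complement Ū. -/
/-!
Ky Fan's principle: for a symmetric matrix `L` and an orthogonal projection `P` of rank `m`,
`tr (P L) ≤ λ₁ + ⋯ + λₘ`, because in an orthonormal eigenbasis of `L` we have
`tr (P L) = ∑ pᵢᵢ λᵢ` with `0 ≤ pᵢᵢ ≤ 1` and `∑ pᵢᵢ = m`. Take for `P` the projection onto the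
span of the `e_u` (`u ∈ U`) and `𝟙_Ū`, minus the projection onto `𝟙`. As `L 𝟙 = 0`,
`tr (P L) = ∑_{u ∈ U} d_u + ⟨𝟙_Ū, L 𝟙_Ū⟩ / (n - m)`, and `⟨𝟙_Ū, L 𝟙_Ū⟩ = |∂(U, Ū)|`.
-/

open Finset

/-- The number of edges of `G` with one endpoint in `U` and the other outside `U`. -/
def edgeBoundary {n : ℕ} (G : SimpleGraph (Fin n)) [DecidableRel G.Adj]
    (U : Finset (Fin n)) : ℕ :=
  ((Finset.univ : Finset (Fin n × Fin n)).filter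
    (fun p => p.1 ∈ U ∧ p.2 ∉ U ∧ G.Adj p.1 p.2)).card

open Matrix

theorem Finset.sum_mul_le_sum_of_threshold {ι : Type*} [Fintype ι] (s : Finset ι) {f c : ι → ℝ}
    {t : ℝ} (hs : ∀ i ∈ s, t ≤ f i) (hsc : ∀ i ∉ s, f i ≤ t) (hc0 : ∀ i, 0 ≤ c i)
    (hc1 : ∀ i, c i ≤ 1) (hsum : ∑ i, c i = #s) :
    ∑ i, c i * f i ≤ ∑ i ∈ s, f i := by
  classical
  have hterm : ∀ i, c i * f i ≤ (if i ∈ s then f i - t else 0) + c i * t := by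
    intro i
    by_cases hi : i ∈ s
    · simp only [hi, if_true]; nlinarith [hs i hi, hc1 i]
    · simp only [hi, if_false]; nlinarith [hsc i hi, hc0 i]
  calc ∑ i, c i * f i ≤ ∑ i, ((if i ∈ s then f i - t else 0) + c i * t) :=
        sum_le_sum fun i _ => hterm i
    _ = ∑ i ∈ s, f i := by
      rw [sum_add_distrib, ← sum_mul, hsum, sum_ite_mem, univ_inter, sum_sub_distrib, sum_const,
        nsmul_eq_mul, sub_add_cancel]

section StarProjection

variable {ι R : Type*} [Fintype ι] [Ring R] [PartialOrder R] [StarRing R] [StarOrderedRing R]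

theorem IsStarProjection.posSemidef {P : Matrix ι ι R} (hP : IsStarProjection P) :
    P.PosSemidef := by
  simpa [← star_eq_conjTranspose, hP.isSelfAdjoint.star_eq, hP.isIdempotentElem.eq]
    using posSemidef_conjTranspose_mul_self P

theorem IsStarProjection.diag_le_one [DecidableEq ι] {P : Matrix ι ι R}
    (hP : IsStarProjection P) (i : ι) : P i i ≤ 1 := by
  simpa using hP.one_sub.posSemidef.diag_nonneg (i := i)

end StarProjection

namespace Matrix

variable {ι : Type*} [Fintype ι]

noncomputable def rankOneProj (x : ι → ℝ) : Matrix ι ι ℝ := (x ⬝ᵥ x)⁻¹ • vecMulVec x x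

theorem isStarProjection_rankOneProj {x : ι → ℝ} (hx : x ≠ 0) :
    IsStarProjection (rankOneProj x) where
  isIdempotentElem := by
    have : x ⬝ᵥ x ≠ 0 := dotProduct_self_eq_zero.not.mpr hx
    rw [IsIdempotentElem, rankOneProj, smul_mul_smul, vecMulVec_mul_vecMulVec, vecMulVec_smul,
      smul_smul, mul_assoc, inv_mul_cancel₀ this, mul_one]
  isSelfAdjoint := by
    simp [rankOneProj, IsSelfAdjoint, star_eq_conjTranspose]

theorem trace_rankOneProj {x : ι → ℝ} (hx : x ≠ 0) : (rankOneProj x).trace = 1 := by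
  rw [rankOneProj, trace_smul, trace_vecMulVec, smul_eq_mul,
    inv_mul_cancel₀ (dotProduct_self_eq_zero.not.mpr hx)]

theorem rankOneProj_mulVec (x y : ι → ℝ) :
    rankOneProj x *ᵥ y = ((x ⬝ᵥ y) / (x ⬝ᵥ x)) • x := by
  simp only [rankOneProj, smul_mulVec, vecMulVec_mulVec, op_smul_eq_smul, smul_smul, div_eq_inv_mul]

theorem mul_rankOneProj_of_mulVec_eq {E : Matrix ι ι ℝ} {x : ι → ℝ} (h : E *ᵥ x = x) :
    E * rankOneProj x = rankOneProj x := by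
  rw [rankOneProj, Matrix.mul_smul, mul_vecMulVec, h]

theorem trace_rankOneProj_mul (x : ι → ℝ) (L : Matrix ι ι ℝ) :
    (rankOneProj x * L).trace = x ⬝ᵥ (L *ᵥ x) / (x ⬝ᵥ x) := by
  rw [rankOneProj, smul_mul, trace_smul, vecMulVec_mul, trace_vecMulVec, dotProduct_mulVec,
    dotProduct_comm (x ᵥ* L), smul_eq_mul, div_eq_inv_mul]

variable [DecidableEq ι]

theorem trace_conjStarAlgAut {R : Type*} [CommRing R] [StarRing R] (u : unitary (Matrix ι ι R))
    (A : Matrix ι ι R) : (Unitary.conjStarAlgAut R _ u A).trace = A.trace := by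
  rw [Unitary.conjStarAlgAut_apply, trace_mul_cycle, Unitary.coe_star_mul_self, one_mul]

theorem IsHermitian.trace_mul_eq_sum_diag_mul_eigenvalues {L : Matrix ι ι ℝ} (hL : L.IsHermitian)
    (P : Matrix ι ι ℝ) :
    (P * L).trace =
      ∑ i, Unitary.conjStarAlgAut ℝ _ (star hL.eigenvectorUnitary) P i i * hL.eigenvalues i := by
  rw [← trace_conjStarAlgAut (star hL.eigenvectorUnitary), map_mul,
    hL.conjStarAlgAut_star_eigenvectorUnitary]
  simp [trace, mul_diagonal]

theorem IsHermitian.trace_mul_le_sum_eigenvalues {n m : ℕ} {L P : Matrix (Fin n) (Fin n) ℝ}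
    (hL : L.IsHermitian) (σ : Equiv.Perm (Fin n)) (hanti : Antitone (hL.eigenvalues ∘ σ))
    (hP : IsStarProjection P) (htr : P.trace = m) (hmn : m < n) :
    (P * L).trace ≤ ∑ i ∈ univ.filter (fun i : Fin n => (i : ℕ) < m), (hL.eigenvalues ∘ σ) i := by
  set Q := Unitary.conjStarAlgAut ℝ _ (star hL.eigenvectorUnitary) P
  have hQ : IsStarProjection Q := hP.map _
  have hQtr : ∑ i, Q (σ i) (σ i) = m :=
    (Equiv.sum_comp σ (fun i => Q i i)).trans ((trace_conjStarAlgAut _ P).trans htr)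
  rw [hL.trace_mul_eq_sum_diag_mul_eigenvalues, ← Equiv.sum_comp σ]
  refine sum_mul_le_sum_of_threshold _ (t := (hL.eigenvalues ∘ σ) ⟨m, hmn⟩) (fun i hi => ?_)
    (fun i hi => ?_) (fun i => hQ.posSemidef.diag_nonneg) (fun i => hQ.diag_le_one _) ?_
  · exact hanti (Fin.le_def.mpr (by simp at hi ⊢; omega))
  · exact hanti (Fin.le_def.mpr (by simp at hi ⊢; omega))
  · rw [hQtr, Fin.card_filter_val_lt, min_eq_right hmn.le]

end Matrix

theorem indicator_one_ne_zero {V : Type*} {s : Finset V} (hs : s.Nonempty) :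
    (s : Set V).indicator (1 : V → ℝ) ≠ 0 := fun h => by
  obtain ⟨i, hi⟩ := hs
  simpa [hi] using congrFun h i

section CutProjection

variable {V : Type*} [Fintype V] [DecidableEq V]

theorem indicator_one_dotProduct (s : Finset V) (y : V → ℝ) :
    (s : Set V).indicator 1 ⬝ᵥ y = ∑ i ∈ s, y i := by
  simp [dotProduct, Set.indicator_apply, sum_ite_mem]

theorem indicator_one_dotProduct_self (s : Finset V) :
    (s : Set V).indicator 1 ⬝ᵥ (s : Set V).indicator (1 : V → ℝ) = #s := by
  rw [indicator_one_dotProduct, sum_congr rfl fun i hi => Set.indicator_of_mem (mem_coe.mpr hi) _]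
  simp

theorem isStarProjection_diagonal_indicator_one (s : Finset V) :
    IsStarProjection (diagonal ((s : Set V).indicator (1 : V → ℝ))) where
  isIdempotentElem := by
    rw [IsIdempotentElem, diagonal_mul_diagonal]
    congr 1
    ext i
    by_cases hi : i ∈ s <;> simp [hi]
  isSelfAdjoint := by simp [IsSelfAdjoint, star_eq_conjTranspose]

noncomputable def cutProjection (U : Finset V) : Matrix V V ℝ :=
  diagonal ((U : Set V).indicator 1) + rankOneProj ((U : Set V)ᶜ.indicator 1) - rankOneProj 1

theorem diagonal_indicator_mul_rankOneProj_compl (U : Finset V) :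
    diagonal ((U : Set V).indicator 1) * rankOneProj ((U : Set V)ᶜ.indicator 1) = 0 := by
  rw [rankOneProj, Matrix.mul_smul, mul_vecMulVec]
  ext i j
  by_cases hi : i ∈ U <;> simp [hi, vecMulVec_apply, mulVec_diagonal]

theorem diagonal_indicator_add_rankOneProj_compl_mulVec_one {U : Finset V} (hU : Uᶜ.Nonempty) :
    (diagonal ((U : Set V).indicator 1) + rankOneProj ((U : Set V)ᶜ.indicator 1)) *ᵥ 1 = 1 := by
  rw [add_mulVec, rankOneProj_mulVec, ← coe_compl, indicator_one_dotProduct,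
    indicator_one_dotProduct_self, coe_compl]
  have : (#Uᶜ : ℝ) ≠ 0 := by exact_mod_cast hU.card_pos.ne'
  ext i
  by_cases hi : i ∈ U <;> simp [hi, mulVec_diagonal, this]

theorem isStarProjection_cutProjection {U : Finset V} (hU : Uᶜ.Nonempty) :
    IsStarProjection (cutProjection U) := by
  have : Nonempty V := let ⟨i, _⟩ := hU; ⟨i⟩
  refine IsStarProjection.sub_of_mul_eq_right (isStarProjection_rankOneProj one_ne_zero) ?_
    (mul_rankOneProj_of_mulVec_eq (diagonal_indicator_add_rankOneProj_compl_mulVec_one hU))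
  refine (isStarProjection_diagonal_indicator_one U).add
    (isStarProjection_rankOneProj ?_) (diagonal_indicator_mul_rankOneProj_compl U)
  simpa using indicator_one_ne_zero hU

theorem trace_cutProjection {U : Finset V} (hU : Uᶜ.Nonempty) :
    (cutProjection U).trace = #U := by
  have : Nonempty V := let ⟨i, _⟩ := hU; ⟨i⟩
  rw [cutProjection, trace_sub, trace_add, trace_rankOneProj one_ne_zero, trace_rankOneProj]
  · simp [trace_diagonal, Set.indicator_apply]
  · simpa using indicator_one_ne_zero hU

end CutProjection

namespace SimpleGraph

variable {V : Type*} [Fintype V] [DecidableEq V] (G : SimpleGraph V) [DecidableRel G.Adj]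

theorem trace_diagonal_indicator_mul_lapMatrix (U : Finset V) :
    (diagonal ((U : Set V).indicator 1) * G.lapMatrix ℝ).trace = ∑ u ∈ U, (G.degree u : ℝ) := by
  simp [trace, diagonal_mul, lapMatrix, degMatrix, Set.indicator_apply, sum_ite_mem]

theorem trace_rankOneProj_one_mul_lapMatrix : (rankOneProj 1 * G.lapMatrix ℝ).trace = 0 := by
  rw [trace_rankOneProj_mul, show G.lapMatrix ℝ *ᵥ 1 = 0 from G.lapMatrix_mulVec_const_eq_zero,
    dotProduct_zero, zero_div]

end SimpleGraph

theorem edgeBoundary_eq_sum {n : ℕ} (G : SimpleGraph (Fin n)) [DecidableRel G.Adj]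
    (U : Finset (Fin n)) :
    (edgeBoundary G U : ℝ) = ∑ i, ∑ j, if i ∈ U ∧ j ∉ U ∧ G.Adj i j then 1 else 0 := by
  rw [← sum_product', univ_product_univ, sum_boole, edgeBoundary]

theorem indicator_compl_dotProduct_lapMatrix_mulVec {n : ℕ} (G : SimpleGraph (Fin n))
    [DecidableRel G.Adj] (U : Finset (Fin n)) :
    (U : Set (Fin n))ᶜ.indicator 1 ⬝ᵥ (G.lapMatrix ℝ *ᵥ (U : Set (Fin n))ᶜ.indicator 1) =
      edgeBoundary G U := by
  set χ := (U : Set (Fin n))ᶜ.indicator (1 : Fin n → ℝ)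
  have hpt : ∀ i j, (if G.Adj i j then (χ i - χ j) ^ 2 else 0) =
      (if i ∈ U ∧ j ∉ U ∧ G.Adj i j then 1 else 0) +
        (if j ∈ U ∧ i ∉ U ∧ G.Adj j i then 1 else 0) := by
    intro i j
    by_cases hij : G.Adj i j <;> by_cases hi : i ∈ U <;> by_cases hj : j ∈ U <;>
      simp [χ, hij, hi, hj, G.adj_comm j i]
  rw [← toLinearMap₂'_apply', SimpleGraph.lapMatrix_toLinearMap₂']
  simp_rw [hpt, sum_add_distrib]
  rw [sum_comm (f := fun i j => if j ∈ U ∧ i ∉ U ∧ G.Adj j i then (1 : ℝ) else 0),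
    ← edgeBoundary_eq_sum]
  ring

theorem trace_cutProjection_mul_lapMatrix {n : ℕ} (G : SimpleGraph (Fin n)) [DecidableRel G.Adj]
    (U : Finset (Fin n)) :
    (cutProjection U * G.lapMatrix ℝ).trace =
      ∑ u ∈ U, (G.degree u : ℝ) + edgeBoundary G U / #Uᶜ := by
  rw [cutProjection, sub_mul, add_mul, trace_sub, trace_add,
    G.trace_diagonal_indicator_mul_lapMatrix, G.trace_rankOneProj_one_mul_lapMatrix,
    trace_rankOneProj_mul, indicator_compl_dotProduct_lapMatrix_mulVec, ← coe_compl,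
    indicator_one_dotProduct_self, sub_zero]

theorem stmt4_general (n : ℕ) (G : SimpleGraph (Fin n)) [DecidableRel G.Adj]
    (hL : (G.lapMatrix ℝ).IsHermitian)
    (lam : Fin n → ℝ) (σ : Equiv.Perm (Fin n))
    (hlam : lam = hL.eigenvalues ∘ σ)
    (hlamAnti : ∀ i j : Fin n, i ≤ j → lam j ≤ lam i)
    (U : Finset (Fin n)) (m : ℕ) (hU : U.card = m) (hmn : m < n) :
    (∑ u ∈ U, (G.degree u : ℝ)) + (edgeBoundary G U : ℝ) / ((n : ℝ) - m) ≤
      ∑ i ∈ Finset.filter (fun i : Fin n => (i : ℕ) < m) Finset.univ, lam i := by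
  subst hlam
  have hUc : Uᶜ.Nonempty := card_pos.mp (by rw [card_compl, Fintype.card_fin]; omega)
  have hcard : (#Uᶜ : ℝ) = n - m := by
    rw [card_compl, Fintype.card_fin, hU, Nat.cast_sub hmn.le]
  calc (∑ u ∈ U, (G.degree u : ℝ)) + (edgeBoundary G U : ℝ) / ((n : ℝ) - m)
      = (cutProjection U * G.lapMatrix ℝ).trace := by
        rw [trace_cutProjection_mul_lapMatrix, hcard]
    _ ≤ _ := hL.trace_mul_le_sum_eigenvalues σ hlamAnti (isStarProjection_cutProjection hUc)
        (by rw [trace_cutProjection hUc, hU]) hmn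

/-- Basic interlacing bound: `∑_{i≤m} λᵢ ≥ ∑_{u∈U} d_u + |∂(U,Ū)|/(n-m)`. -/
theorem stmt4 (n : ℕ) (G : SimpleGraph (Fin n)) [DecidableRel G.Adj]
    (hconn : G.Connected)
    (hL : (G.lapMatrix ℝ).IsHermitian)
    (lam : Fin n → ℝ) (σ : Equiv.Perm (Fin n))
    (hlam : lam = hL.eigenvalues ∘ σ)
    (hlamAnti : ∀ i j : Fin n, i ≤ j → lam j ≤ lam i)
    (U : Finset (Fin n)) (m : ℕ) (hU : U.card = m) (hm0 : 0 < m) (hmn : m < n) :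
    (∑ u ∈ U, (G.degree u : ℝ)) + (edgeBoundary G U : ℝ) / ((n : ℝ) - m) ≤
      ∑ i ∈ Finset.filter (fun i : Fin n => (i : ℕ) < m) Finset.univ, lam i :=
  stmt4_general n G hL lam σ hlam hlamAnti U m hU hmn
end

section
/- Let G be a connected finite simple graph on n vertices with Laplacian eigenvalues λ₁ ≥ ⋯ ≥ λₙ = 0. For any vertex subset U with |U| = m, 0 < m < n, we have λ_{n-1} + λ_{n-2} + ⋯ + λ_{n-m} ≤ (∑_{u∈U} d_u) + |∂(U, Ū)|/(n − m). -/
open Finset Matrix WithLp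
open scoped RealInnerProductSpace

theorem sum_filter_le_sum_mul_of_antitone {τ R : Type*} [Fintype τ] [LinearOrder τ]
    [CommRing R] [LinearOrder R] [IsStrictOrderedRing R] {f q : τ → R} (hf : Antitone f)
    (hq0 : ∀ i, 0 ≤ q i) (hq1 : ∀ i, q i ≤ 1) (i₀ : τ)
    (hq : ∑ i, q i = #{i | i₀ ≤ i}) :
    ∑ i with i₀ ≤ i, f i ≤ ∑ i, f i * q i := by
  set T : Finset τ := {i | i₀ ≤ i}
  -- the pivot `f i₀` separates the values of `f` on `T` from those off `T`
  have hT : ∑ i ∈ T, (f i - f i₀) * (1 - q i) ≤ 0 :=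
    sum_nonpos fun i hi => mul_nonpos_of_nonpos_of_nonneg
      (sub_nonpos.2 (hf (mem_filter.1 hi).2)) (sub_nonneg.2 (hq1 i))
  have hTc : ∑ i ∈ Tᶜ, (f i₀ - f i) * q i ≤ 0 := by
    refine sum_nonpos fun i hi => mul_nonpos_of_nonpos_of_nonneg ?_ (hq0 i)
    have : i < i₀ := by simpa [T] using hi
    exact sub_nonpos.2 (hf this.le)
  have hsplit : ∑ i ∈ T, f i - ∑ i, f i * q i = ∑ i ∈ T, (f i - f i₀) * (1 - q i)
      + ∑ i ∈ Tᶜ, (f i₀ - f i) * q i + f i₀ * (#T - ∑ i, q i) := by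
    rw [← sum_add_sum_compl T (fun i => f i * q i), ← sum_add_sum_compl T q]
    simp only [sub_mul, mul_sub, mul_one, sum_sub_distrib, mul_add, ← mul_sum, sum_const,
      nsmul_eq_mul]
    ring
  rw [hq, sub_self, mul_zero] at hsplit
  linarith

theorem Orthonormal.sum_sq_inner_le_one {E κ : Type*} [NormedAddCommGroup E]
    [InnerProductSpace ℝ E] [Fintype κ] {w : κ → E} (hw : Orthonormal ℝ w) {x : E}
    (hx : ‖x‖ = 1) :
    ∑ j, ⟪x, w j⟫ ^ 2 ≤ 1 := by
  simpa [hx, real_inner_comm] using hw.sum_inner_products_le x (s := univ)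

theorem OrthonormalBasis.sum_sum_sq_inner {E ι κ : Type*} [NormedAddCommGroup E]
    [InnerProductSpace ℝ E] [Fintype ι] [Fintype κ] (b : OrthonormalBasis ι ℝ E)
    {w : κ → E} (hw : Orthonormal ℝ w) :
    ∑ i, ∑ j, ⟪b i, w j⟫ ^ 2 = Fintype.card κ := by
  rw [sum_comm]
  simp [b.sum_sq_inner_right, hw.1]

section Spectrum

variable {ι : Type*} [Fintype ι] [DecidableEq ι] {A : Matrix ι ι ℝ}

theorem Matrix.IsHermitian.inner_toEuclideanLin_self (hA : A.IsHermitian)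
    (v : EuclideanSpace ℝ ι) :
    ⟪v, A.toEuclideanLin v⟫ = ∑ i, hA.eigenvalues i * ⟪hA.eigenvectorBasis i, v⟫ ^ 2 := by
  rw [← hA.eigenvectorBasis.sum_inner_mul_inner]
  refine sum_congr rfl fun i _ => ?_
  have hb : A.toEuclideanLin (hA.eigenvectorBasis i) =
      hA.eigenvalues i • hA.eigenvectorBasis i := by
    rw [toLpLin_apply, hA.mulVec_eigenvectorBasis]; rfl
  rw [← isSymmetric_toEuclideanLin_iff.mpr hA, hb, real_inner_smul_left, real_inner_comm]
  ring

theorem Matrix.IsHermitian.sum_eigenvalues_le_sum_inner_toEuclideanLin {τ κ : Type*} [Fintype τ]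
    [LinearOrder τ] [Fintype κ] (hA : A.IsHermitian) (e : τ ≃ ι)
    (he : Antitone (hA.eigenvalues ∘ e)) {w : κ → EuclideanSpace ℝ ι}
    (hw : Orthonormal ℝ w) (i₀ : τ) (hcard : #{i | i₀ ≤ i} = Fintype.card κ) :
    ∑ i with i₀ ≤ i, hA.eigenvalues (e i) ≤ ∑ j, ⟪w j, A.toEuclideanLin (w j)⟫ := by
  set b := hA.eigenvectorBasis
  calc ∑ i with i₀ ≤ i, hA.eigenvalues (e i)
      ≤ ∑ i, hA.eigenvalues (e i) * ∑ j, ⟪b (e i), w j⟫ ^ 2 :=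
        sum_filter_le_sum_mul_of_antitone he (fun _ => sum_nonneg fun _ _ => sq_nonneg _)
          (fun i => hw.sum_sq_inner_le_one (b.orthonormal.1 (e i)))
          i₀ (by rw [hcard, e.sum_comp fun i => ∑ j, ⟪b i, w j⟫ ^ 2, b.sum_sum_sq_inner hw])
    _ = ∑ j, ⟪w j, A.toEuclideanLin (w j)⟫ := by
        simp_rw [e.sum_comp fun i => hA.eigenvalues i * ∑ j, ⟪b i, w j⟫ ^ 2, mul_sum,
          hA.inner_toEuclideanLin_self]
        exact sum_comm

end Spectrum

theorem orthonormal_optionElim_single {𝕜 ι : Type*} [RCLike 𝕜] [Fintype ι] [DecidableEq ι]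
    {U : Finset ι} {x : EuclideanSpace 𝕜 ι} (hx : ‖x‖ = 1) (hxU : ∀ u ∈ U, x u = 0) :
    Orthonormal 𝕜 fun j : Option U => j.elim x fun u => EuclideanSpace.single u.1 1 := by
  rw [orthonormal_iff_ite]
  rintro (_ | ⟨u, hu⟩) (_ | ⟨v, hv⟩)
  · simp [inner_self_eq_norm_sq_to_K, hx]
  · simp [EuclideanSpace.inner_single_right, hxU v hv]
  · simp [EuclideanSpace.inner_single_left, hxU u hu]
  · simp [EuclideanSpace.inner_single_left, PiLp.single_apply]

theorem Matrix.inner_toEuclideanLin_single {𝕜 ι : Type*} [RCLike 𝕜] [Fintype ι]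
    [DecidableEq ι] (A : Matrix ι ι 𝕜) (u : ι) :
    inner 𝕜 (EuclideanSpace.single u 1) (A.toEuclideanLin (EuclideanSpace.single u 1)) =
      A u u := by
  simp [EuclideanSpace.inner_single_left, toLpLin_apply]

theorem norm_sq_toLp_ite {ι : Type*} [Fintype ι] [DecidableEq ι] (U : Finset ι) (c : ℝ) :
    ‖(toLp 2 fun i => if i ∈ U then 0 else c : EuclideanSpace ℝ ι)‖ ^ 2 =
      #Uᶜ * c ^ 2 := by
  rw [EuclideanSpace.norm_sq_eq]
  simp [apply_ite, sum_ite, compl_eq_univ_sdiff, filter_notMem_eq_sdiff]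

namespace SimpleGraph

variable {n : ℕ} (G : SimpleGraph (Fin n)) [DecidableRel G.Adj] (U : Finset (Fin n))

theorem lapMatrix_apply_self (R : Type*) [Ring R] (i : Fin n) :
    G.lapMatrix R i i = G.degree i := by
  simp [lapMatrix, degMatrix]

theorem edgeBoundary_eq_sum_sum :
    (edgeBoundary G U : ℝ) =
      ∑ i, ∑ j, if i ∈ U ∧ j ∉ U ∧ G.Adj i j then 1 else 0 := by
  rw [edgeBoundary, ← sum_boole, ← univ_product_univ, sum_product]

theorem inner_lapMatrix_toLp_ite (c : ℝ) :
    ⟪(toLp 2 fun i => if i ∈ U then 0 else c : EuclideanSpace ℝ (Fin n)),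
      (G.lapMatrix ℝ).toEuclideanLin (toLp 2 fun i => if i ∈ U then 0 else c)⟫ =
      edgeBoundary G U * c ^ 2 := by
  have hterm : ∀ i j, (if G.Adj i j then
      ((if i ∈ U then 0 else c) - if j ∈ U then 0 else c) ^ 2 else 0) =
      c ^ 2 * ((if i ∈ U ∧ j ∉ U ∧ G.Adj i j then 1 else 0) +
        if j ∈ U ∧ i ∉ U ∧ G.Adj j i then 1 else 0) := by
    intro i j
    by_cases hij : G.Adj i j <;> by_cases hi : i ∈ U <;> by_cases hj : j ∈ U <;>
      simp [hij, G.adj_comm j i, hi, hj]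
  rw [EuclideanSpace.inner_toLp_toLp, toLpLin_toLp, toLin'_apply, dotProduct_comm, star_trivial,
    ← toLinearMap₂'_apply', lapMatrix_toLinearMap₂', edgeBoundary_eq_sum_sum]
  simp_rw [hterm, ← mul_sum, sum_add_distrib]
  rw [sum_comm (f := fun i j => if j ∈ U ∧ i ∉ U ∧ G.Adj j i then (1 : ℝ) else 0)]
  ring

end SimpleGraph

theorem stmt5_general (n : ℕ) (G : SimpleGraph (Fin n)) [DecidableRel G.Adj]
    (hL : (G.lapMatrix ℝ).IsHermitian)
    (lam : Fin n → ℝ) (σ : Equiv.Perm (Fin n))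
    (hlam : lam = hL.eigenvalues ∘ σ)
    (hlamAnti : ∀ i j : Fin n, i ≤ j → lam j ≤ lam i)
    (U : Finset (Fin n)) (m : ℕ) (hU : U.card = m) (hmn : m < n) :
    ∑ i ∈ Finset.filter
        (fun i : Fin n => n - 1 - m ≤ (i : ℕ) ∧ (i : ℕ) < n - 1) Finset.univ, lam i ≤
      (∑ u ∈ U, (G.degree u : ℝ)) + (edgeBoundary G U : ℝ) / ((n : ℝ) - m) := by
  subst hlam hU
  have hcompl : (#Uᶜ : ℝ) = n - #U := by rw [card_compl, Fintype.card_fin, Nat.cast_sub hmn.le]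
  have hpos : (0 : ℝ) < n - #U := sub_pos.2 (by exact_mod_cast hmn)
  set c := (√(n - #U : ℝ))⁻¹
  have hc : c ^ 2 = (n - #U : ℝ)⁻¹ := by rw [inv_pow, Real.sq_sqrt hpos.le]
  set x : EuclideanSpace ℝ (Fin n) := toLp 2 fun i => if i ∈ U then 0 else c
  have hx : ‖x‖ = 1 := by
    rw [← Real.sqrt_sq (norm_nonneg x), norm_sq_toLp_ite, hc, hcompl, mul_inv_cancel₀ hpos.ne',
      Real.sqrt_one]
  set i₀ : Fin n := ⟨n - 1 - #U, by omega⟩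
  have hcard : #{i | i₀ ≤ i} = Fintype.card (Option U) := by
    rw [Fintype.card_option, Fintype.card_coe, filter_le_eq_Ici, Fin.card_Ici]
    simp only [i₀]
    omega
  calc _ ≤ ∑ i with i₀ ≤ i, hL.eigenvalues (σ i) :=
        sum_le_sum_of_subset_of_nonneg (monotone_filter_right _ fun _ _ hi => Fin.le_def.2 hi.1)
          fun i _ _ => (G.posSemidef_lapMatrix ℝ).eigenvalues_nonneg _
    _ ≤ _ := hL.sum_eigenvalues_le_sum_inner_toEuclideanLin σ hlamAnti
        (orthonormal_optionElim_single hx fun u hu => if_pos hu) i₀ hcard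
    _ = _ := by
      rw [Fintype.sum_option]
      simp only [Option.elim, x, G.inner_lapMatrix_toLp_ite, Matrix.inner_toEuclideanLin_single,
        G.lapMatrix_apply_self, sum_coe_sort U fun u => (G.degree u : ℝ)]
      rw [hc, div_eq_mul_inv, add_comm]

/-- Basic interlacing bound: `λ_{n-1} + ⋯ + λ_{n-m} ≤ ∑_{u∈U} d_u + |∂(U,Ū)|/(n-m)`.
In 0-based indexing these are the eigenvalues `lam i` with `n-1-m ≤ i < n-1`. -/
theorem stmt5 (n : ℕ) (G : SimpleGraph (Fin n)) [DecidableRel G.Adj]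
    (hconn : G.Connected)
    (hL : (G.lapMatrix ℝ).IsHermitian)
    (lam : Fin n → ℝ) (σ : Equiv.Perm (Fin n))
    (hlam : lam = hL.eigenvalues ∘ σ)
    (hlamAnti : ∀ i j : Fin n, i ≤ j → lam j ≤ lam i)
    (U : Finset (Fin n)) (m : ℕ) (hU : U.card = m) (hm0 : 0 < m) (hmn : m < n) :
    ∑ i ∈ Finset.filter
        (fun i : Fin n => n - 1 - m ≤ (i : ℕ) ∧ (i : ℕ) < n - 1) Finset.univ, lam i ≤
      (∑ u ∈ U, (G.degree u : ℝ)) + (edgeBoundary G U : ℝ) / ((n : ℝ) - m) :=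
  stmt5_general n G hL lam σ hlam hlamAnti U m hU hmn
end

section
/- Let G be a connected finite simple graph on n > 1 vertices with Laplacian eigenvalues λ₁ ≥ ⋯ ≥ λₙ = 0 and degrees d₁ ≥ ⋯ ≥ dₙ. Then for every 0 < m < n, λ₁ + ⋯ + λₘ ≥ d₁ + ⋯ + dₘ + 1. -/
/-!
Let `S` be the `m` vertices with degrees `d₁, …, dₘ` and let `D` be the set of vertices outside `S`
with a neighbour in `S`; it is nonempty because `G` is connected and `m < n`. The unit vectors
`e_v` (`v ∈ S`) together with `𝟙_D / √|D|` form an orthonormal frame `N` of size `m + 1`, and the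
compression `B = Nᵀ L N` has trace `∑_{v ∈ S} d_v + e(D, Dᶜ) / |D|`. Dropping the eigenvector of
the smallest eigenvalue of `B` leaves an orthonormal `m`-frame, so by Ky Fan's maximum principle
`λ₁ + ⋯ + λₘ ≥ tr B - λ_min(B)`. Testing `B` against the vector with `N z = 𝟙_{S ∪ D}` bounds
`λ_min(B) ≤ e(D, R) / (m + |D|)`, where `R = (S ∪ D)ᶜ` receives no edge from `S`. Since
`e(D, Dᶜ) = e(D, S) + e(D, R)` and `e(D, S) ≥ |D|`, this gives `tr B - λ_min(B) ≥ ∑_{v ∈ S} d_v + 1`.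
-/

open Finset Matrix

lemma Antitone.sum_mul_le_sum_filter_lt {n m : ℕ} (hmn : m < n) {lam c : Fin n → ℝ}
    (hlam : Antitone lam) (hc0 : ∀ i, 0 ≤ c i) (hc1 : ∀ i, c i ≤ 1) (hc : ∑ i, c i = m) :
    ∑ i, lam i * c i ≤ ∑ i ∈ univ.filter (fun i : Fin n => (i : ℕ) < m), lam i := by
  set F := univ.filter (fun i : Fin n => (i : ℕ) < m)
  set t := lam ⟨m, hmn⟩
  have hF : (#F : ℝ) = m := by simp [F, Fin.card_filter_val_lt, hmn.le]
  have key : ∑ i ∈ F, lam i - ∑ i, lam i * c i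
      = ∑ i ∈ F, (lam i - t) * (1 - c i) + ∑ i ∈ Fᶜ, (t - lam i) * c i := by
    have hcF := sum_add_sum_compl F c
    have hlamF := sum_add_sum_compl F (fun i => lam i * c i)
    simp only [sub_mul, mul_sub, mul_one, sum_sub_distrib, ← mul_sum, sum_const, nsmul_eq_mul, hF]
    linear_combination hlamF - t * hcF - t * hc
  have hle : ∀ i ∈ F, 0 ≤ (lam i - t) * (1 - c i) := fun i hi =>
    mul_nonneg (sub_nonneg.2 (hlam (Fin.le_def.2 (mem_filter.1 hi).2.le))) (sub_nonneg.2 (hc1 i))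
  have hge : ∀ i ∈ Fᶜ, 0 ≤ (t - lam i) * c i := fun i hi =>
    mul_nonneg (sub_nonneg.2 (hlam (Fin.le_def.2 (by simpa [F] using hi)))) (hc0 i)
  linarith [sum_nonneg hle, sum_nonneg hge]

namespace Matrix

section

variable {ι κ : Type*} [Fintype ι] [Fintype κ]

lemma diag_mul_conjTranspose_le_one [DecidableEq κ] {W : Matrix ι κ ℝ} (hW : Wᴴ * W = 1)
    (i : ι) : (W * Wᴴ) i i ≤ 1 := by
  set P := W * Wᴴ
  have hP : P * P = P := by
    simp only [P, Matrix.mul_assoc, ← Matrix.mul_assoc Wᴴ, hW, Matrix.one_mul]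
  have hsymm : ∀ j, P j i = P i j := fun j => by
    simp [P, mul_apply, mul_comm]
  have hsq : P i i ^ 2 ≤ P i i := calc
    P i i ^ 2 ≤ ∑ j, P i j * P j i := by
      simp only [hsymm, ← sq]
      exact single_le_sum (f := fun j => P i j ^ 2) (fun _ _ => sq_nonneg _) (mem_univ i)
    _ = P i i := by rw [← mul_apply, hP]
  nlinarith [(posSemidef_self_mul_conjTranspose W).diag_nonneg (i := i)]

lemma trace_conjTranspose_mul_mul_eq_sum_col (X : Matrix ι κ ℝ) (A : Matrix ι ι ℝ) :
    trace (Xᴴ * A * X) = ∑ k, X.col k ⬝ᵥ (A *ᵥ X.col k) := by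
  simp [trace, Matrix.mul_assoc, mul_apply, dotProduct, mulVec, col_apply]

lemma dotProduct_conjTranspose_mul_mul_mulVec (N : Matrix ι κ ℝ) (A : Matrix ι ι ℝ)
    (z : κ → ℝ) : z ⬝ᵥ ((Nᴴ * A * N) *ᵥ z) = (N *ᵥ z) ⬝ᵥ (A *ᵥ (N *ᵥ z)) := by
  rw [← mulVec_mulVec, ← mulVec_mulVec, dotProduct_mulVec, conjTranspose_eq_transpose_of_trivial,
    vecMul_transpose]

namespace IsHermitian

variable [DecidableEq ι] {A : Matrix ι ι ℝ}

lemma star_eigenvectorUnitary_mul_mul (hA : A.IsHermitian) :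
    star (hA.eigenvectorUnitary : Matrix ι ι ℝ) * A * (hA.eigenvectorUnitary : Matrix ι ι ℝ)
      = diagonal hA.eigenvalues := by
  simpa using hA.conjStarAlgAut_star_eigenvectorUnitary

/-- `c i` is the squared length of the projection of the columns of `X` onto the `i`-th
eigenvector. -/
lemma exists_spectral_weights [DecidableEq κ] (hA : A.IsHermitian) (X : Matrix ι κ ℝ) :
    ∃ c : ι → ℝ, (∀ i, 0 ≤ c i) ∧ ∑ i, c i = trace (Xᴴ * X) ∧
      trace (Xᴴ * A * X) = ∑ i, hA.eigenvalues i * c i ∧ (Xᴴ * X = 1 → ∀ i, c i ≤ 1) := by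
  set U : Matrix ι ι ℝ := ↑hA.eigenvectorUnitary
  set W := star U * X
  have hU : U * star U = 1 := Unitary.coe_mul_star_self _
  have hWW : Wᴴ * W = Xᴴ * X := by
    rw [conjTranspose_mul, star_eq_conjTranspose, conjTranspose_conjTranspose, Matrix.mul_assoc,
      ← Matrix.mul_assoc U, hU, Matrix.one_mul]
  have hA' : A = U * diagonal hA.eigenvalues * star U := by
    rw [← star_eigenvectorUnitary_mul_mul hA, ← Matrix.mul_assoc, ← Matrix.mul_assoc, hU,
      Matrix.one_mul, Matrix.mul_assoc, hU, Matrix.mul_one]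
  refine ⟨fun i => (W * Wᴴ) i i, fun i => (posSemidef_self_mul_conjTranspose W).diag_nonneg,
    ?_, ?_, fun hX => diag_mul_conjTranspose_le_one (hWW.trans hX)⟩
  · rw [← hWW, ← trace_mul_comm]; rfl
  · have : Xᴴ * A * X = Wᴴ * (diagonal hA.eigenvalues * W) := by
      simp only [hA', W, conjTranspose_mul, star_eq_conjTranspose, conjTranspose_conjTranspose,
        Matrix.mul_assoc]
    rw [this, trace_mul_comm, Matrix.mul_assoc, trace]
    simp [diagonal_mul]

lemma eigenvalues_mul_dotProduct_le (hA : A.IsHermitian) {i₀ : ι}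
    (hi₀ : ∀ i, hA.eigenvalues i₀ ≤ hA.eigenvalues i) (z : ι → ℝ) :
    hA.eigenvalues i₀ * (z ⬝ᵥ z) ≤ z ⬝ᵥ (A *ᵥ z) := by
  obtain ⟨c, hc0, hcsum, htr, -⟩ := hA.exists_spectral_weights (replicateCol Unit z)
  have hzz : trace ((replicateCol Unit z)ᴴ * replicateCol Unit z) = z ⬝ᵥ z := by
    simp [trace, mul_apply, dotProduct]
  have hzAz : trace ((replicateCol Unit z)ᴴ * A * replicateCol Unit z) = z ⬝ᵥ (A *ᵥ z) := by
    simp [Matrix.mul_assoc, trace, mul_apply, dotProduct, mulVec]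
  rw [← hzz, ← hzAz, ← hcsum, htr, mul_sum]
  exact sum_le_sum fun i _ => mul_le_mul_of_nonneg_right (hi₀ i) (hc0 i)

end IsHermitian

end

namespace IsHermitian

variable {κ : Type*} [Fintype κ] [DecidableEq κ] {n : ℕ} {A : Matrix (Fin n) (Fin n) ℝ}
  {lam : Fin n → ℝ} {σ : Equiv.Perm (Fin n)}

/-- Ky Fan's maximum principle. -/
theorem trace_conjTranspose_mul_mul_le_sum (hA : A.IsHermitian) (hlam : lam = hA.eigenvalues ∘ σ)
    (hanti : Antitone lam) {X : Matrix (Fin n) κ ℝ} (hX : Xᴴ * X = 1)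
    (hκ : Fintype.card κ < n) :
    trace (Xᴴ * A * X) ≤ ∑ i ∈ univ.filter (fun i : Fin n => (i : ℕ) < Fintype.card κ), lam i := by
  obtain ⟨c, hc0, hcsum, htr, hc1⟩ := hA.exists_spectral_weights X
  rw [hX, trace_one, ← Equiv.sum_comp σ] at hcsum
  rw [htr, ← Equiv.sum_comp σ]
  subst hlam
  exact hanti.sum_mul_le_sum_filter_lt hκ (fun i => hc0 _) (fun i => hc1 hX _) hcsum

theorem trace_sub_div_le_sum (hA : A.IsHermitian) (hlam : lam = hA.eigenvalues ∘ σ)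
    (hanti : Antitone lam) {N : Matrix (Fin n) κ ℝ} (hN : Nᴴ * N = 1)
    (hκ : Fintype.card κ ≤ n) {z : κ → ℝ} (hz : z ≠ 0) :
    trace (Nᴴ * A * N) - (N *ᵥ z) ⬝ᵥ (A *ᵥ (N *ᵥ z)) / (z ⬝ᵥ z)
      ≤ ∑ i ∈ univ.filter (fun i : Fin n => (i : ℕ) + 1 < Fintype.card κ), lam i := by
  set B := Nᴴ * A * N
  have hB : B.IsHermitian := isHermitian_conjTranspose_mul_mul N hA
  have : Nonempty κ := by obtain ⟨k, -⟩ := Function.ne_iff.1 hz; exact ⟨k⟩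
  obtain ⟨i₀, -, hi₀⟩ := exists_min_image univ hB.eigenvalues univ_nonempty
  have hray : hB.eigenvalues i₀ ≤ (N *ᵥ z) ⬝ᵥ (A *ᵥ (N *ᵥ z)) / (z ⬝ᵥ z) := by
    rw [le_div_iff₀ (by simpa using dotProduct_self_star_pos_iff.2 hz),
      ← dotProduct_conjTranspose_mul_mul_mulVec]
    exact hB.eigenvalues_mul_dotProduct_le (fun i => hi₀ i (mem_univ i)) z
  -- Discarding the eigenvector of `B` for its smallest eigenvalue leaves an orthonormal frame.
  set U : Matrix κ κ ℝ := ↑hB.eigenvectorUnitary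
  set e : {j // j ≠ i₀} → κ := Subtype.val
  set X := (N * U).submatrix id e
  have hcompress : ∀ M : Matrix (Fin n) (Fin n) ℝ,
      Xᴴ * M * X = ((N * U)ᴴ * M * (N * U)).submatrix e e := fun M => by
    rw [conjTranspose_submatrix, submatrix_mul _ _ _ id _ Function.bijective_id,
      submatrix_mul _ _ _ id _ Function.bijective_id, submatrix_id_id]
  have hXX : Xᴴ * X = 1 := by
    have h := hcompress 1
    rw [Matrix.mul_one, Matrix.mul_one] at h
    rw [h, conjTranspose_mul, Matrix.mul_assoc, ← Matrix.mul_assoc Nᴴ, hN, Matrix.one_mul,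
      ← star_eq_conjTranspose, Unitary.coe_star_mul_self, submatrix_one _ Subtype.val_injective]
  have htrX : trace (Xᴴ * A * X) = trace B - hB.eigenvalues i₀ := by
    have hdiag : (N * U)ᴴ * A * (N * U) = diagonal hB.eigenvalues := by
      rw [← hB.star_eigenvectorUnitary_mul_mul, conjTranspose_mul, ← star_eq_conjTranspose]
      simp only [B, U, Matrix.mul_assoc]
    rw [hcompress, hdiag, submatrix_diagonal _ _ Subtype.val_injective, trace_diagonal,
      hB.trace_eq_sum_eigenvalues, Fintype.sum_eq_add_sum_subtype_ne _ i₀]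
    simp
  have hcard : Fintype.card {j // j ≠ i₀} + 1 = Fintype.card κ := by
    rw [Fintype.card_subtype_compl, Fintype.card_subtype_eq]
    have := Fintype.card_pos (α := κ)
    omega
  calc trace B - (N *ᵥ z) ⬝ᵥ (A *ᵥ (N *ᵥ z)) / (z ⬝ᵥ z) ≤ trace (Xᴴ * A * X) := by
        linarith
    _ ≤ _ := hA.trace_conjTranspose_mul_mul_le_sum hlam hanti hXX (by omega)
    _ = _ := sum_congr (filter_congr fun i _ => by omega) fun _ _ => rfl

end IsHermitian

section

variable {ι : Type*} (S D : Finset ι)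

/-- The coefficients expressing `𝟙_{S ∪ D}` in `indicatorFrame S D`. -/
noncomputable def indicatorFrameCoeffs : Option S → ℝ := fun k => k.elim (√(#D : ℝ)) fun _ => 1

lemma dotProduct_indicatorFrameCoeffs :
    indicatorFrameCoeffs S D ⬝ᵥ indicatorFrameCoeffs S D = #S + #D := by
  simp [dotProduct, indicatorFrameCoeffs, Fintype.sum_option, add_comm]

variable [DecidableEq ι]

/-- Columns: the unit vectors `e_s` for `s ∈ S`, then `𝟙_D / √|D|`. -/
noncomputable def indicatorFrame : Matrix ι (Option S) ℝ :=
  of fun v k => k.elim ((√(#D : ℝ))⁻¹ * (D : Set ι).indicator 1 v)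
    fun s => (Pi.single (s : ι) 1 : ι → ℝ) v

variable {S D}

lemma col_indicatorFrame_none :
    (indicatorFrame S D).col none = (√(#D : ℝ))⁻¹ • (D : Set ι).indicator 1 := rfl

lemma col_indicatorFrame_some (s : S) :
    (indicatorFrame S D).col (some s) = Pi.single (s : ι) 1 := rfl

lemma indicatorFrame_mulVec_coeffs (hSD : Disjoint S D) :
    indicatorFrame S D *ᵥ indicatorFrameCoeffs S D = (↑(S ∪ D) : Set ι).indicator 1 := by
  ext v
  have hS : ∑ s : S, (Pi.single (s : ι) 1 : ι → ℝ) v = if v ∈ S then 1 else 0 := by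
    rw [sum_coe_sort S fun s => (Pi.single s 1 : ι → ℝ) v, sum_pi_single]
  simp only [mulVec, dotProduct, indicatorFrame, indicatorFrameCoeffs, Fintype.sum_option, of_apply,
    Option.elim, mul_one, hS]
  by_cases hvD : v ∈ D
  · have : (0 : ℝ) < √(#D : ℝ) := Real.sqrt_pos.2 (by exact_mod_cast card_pos.2 ⟨v, hvD⟩)
    simp [hvD, disjoint_right.1 hSD hvD, this.ne']
  · simp [hvD, Set.indicator_apply]

variable [Fintype ι]

lemma conjTranspose_indicatorFrame_mul_self (hSD : Disjoint S D) (hD : D.Nonempty) :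
    (indicatorFrame S D)ᴴ * indicatorFrame S D = 1 := by
  have hb : (0 : ℝ) < #D := by exact_mod_cast hD.card_pos
  ext (_ | s) (_ | s')
  · simp [indicatorFrame, mul_apply, Set.indicator_apply, ← mul_inv, Real.mul_self_sqrt hb.le,
      hb.ne']
  · simp [indicatorFrame, mul_apply, Set.indicator_apply, Pi.single_apply,
      disjoint_left.1 hSD s'.2]
  · simp [indicatorFrame, mul_apply, Set.indicator_apply, Pi.single_apply,
      disjoint_left.1 hSD s.2]
  · simp [indicatorFrame, mul_apply, Pi.single_apply, one_apply, eq_comm]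

lemma trace_conjTranspose_indicatorFrame_mul_mul (A : Matrix ι ι ℝ) :
    trace ((indicatorFrame S D)ᴴ * A * indicatorFrame S D)
      = ∑ s ∈ S, A s s + (D : Set ι).indicator 1 ⬝ᵥ (A *ᵥ (D : Set ι).indicator 1) / #D := by
  rw [trace_conjTranspose_mul_mul_eq_sum_col, Fintype.sum_option, col_indicatorFrame_none]
  simp only [col_indicatorFrame_some, mulVec_single_one, single_one_dotProduct, col_apply]
  rw [sum_coe_sort S (fun s => A s s), mulVec_smul, dotProduct_smul, smul_dotProduct, smul_eq_mul,
    smul_eq_mul, ← mul_assoc, ← mul_inv, Real.mul_self_sqrt (Nat.cast_nonneg _)]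
  ring

end

end Matrix

namespace SimpleGraph

variable {V : Type*} (G : SimpleGraph V) [DecidableRel G.Adj]

lemma card_interedges_eq_sum (A B : Finset V) :
    (#(G.interedges A B) : ℝ) = ∑ v ∈ A, ∑ u ∈ B, if G.Adj v u then 1 else 0 := by
  rw [interedges_def, card_filter, sum_product]
  push_cast
  rfl

variable [Fintype V] [DecidableEq V]

lemma lapMatrix_apply_self_s6 (v : V) : G.lapMatrix ℝ v v = G.degree v := by
  simp [lapMatrix, degMatrix]

lemma indicator_dotProduct_lapMatrix_mulVec (W : Finset V) :
    (W : Set V).indicator 1 ⬝ᵥ (G.lapMatrix ℝ *ᵥ (W : Set V).indicator 1)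
      = #(G.interedges W Wᶜ) := by
  have hLx : ∀ v ∈ W, (G.lapMatrix ℝ *ᵥ (W : Set V).indicator 1) v
      = ∑ u ∈ Wᶜ, if G.Adj v u then 1 else 0 := by
    intro v hv
    have hN : ∑ u ∈ G.neighborFinset v, (W : Set V).indicator 1 u
        = ∑ u ∈ W, if G.Adj v u then (1 : ℝ) else 0 := by
      rw [neighborFinset_eq_filter, sum_filter, ← sum_add_sum_compl W,
        sum_eq_zero (s := Wᶜ) fun u hu => by simp [mem_compl.1 hu], add_zero]
      exact sum_congr rfl fun u hu => by simp [hu]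
    rw [lapMatrix_mulVec_apply, hN, degree_eq_sum_if_adj, ← sum_add_sum_compl W]
    simp [hv]
  rw [card_interedges_eq_sum, ← sum_congr rfl hLx]
  simp [dotProduct, Set.indicator_apply]

def outerBoundary (S : Finset V) : Finset V := {w | w ∉ S ∧ ∃ v ∈ S, G.Adj v w}

variable {G}

lemma Connected.outerBoundary_nonempty (hG : G.Connected) {S : Finset V} {v w : V} (hv : v ∈ S)
    (hw : w ∉ S) : (G.outerBoundary S).Nonempty := by
  obtain ⟨d, -, hd₁, hd₂⟩ := (hG.preconnected v w).some.exists_boundary_dart (S : Set V) hv hw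
  exact ⟨d.snd, mem_filter.2 ⟨mem_univ _, hd₂, d.fst, hd₁, d.adj⟩⟩

variable (G) (S : Finset V)

lemma disjoint_outerBoundary : Disjoint S (G.outerBoundary S) :=
  disjoint_right.2 fun _ hw => (mem_filter.1 hw).2.1

lemma card_outerBoundary_le_card_interedges :
    #(G.outerBoundary S) ≤ #(G.interedges (G.outerBoundary S) S) := by
  refine card_le_card_of_surjOn Prod.fst fun w hw => ?_
  obtain ⟨-, -, v, hv, hvw⟩ := mem_filter.1 hw
  exact ⟨(w, v), (G.mem_interedges_iff).2 ⟨hw, hv, hvw.symm⟩, rfl⟩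

lemma card_interedges_union_outerBoundary_compl :
    #(G.interedges (S ∪ G.outerBoundary S) (S ∪ G.outerBoundary S)ᶜ)
      = #(G.interedges (G.outerBoundary S) (S ∪ G.outerBoundary S)ᶜ) := by
  congr 1
  ext ⟨x, y⟩
  simp only [mem_interedges_iff, mem_union, mem_compl, outerBoundary, mem_filter, mem_univ,
    true_and]
  constructor
  · rintro ⟨hx | hx, hy, hxy⟩
    · exact (hy (Or.inr ⟨fun h => hy (Or.inl h), x, hx, hxy⟩)).elim
    · exact ⟨hx, hy, hxy⟩
  · rintro ⟨hx, hy, hxy⟩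
    exact ⟨Or.inr hx, hy, hxy⟩

lemma card_interedges_outerBoundary_compl :
    #(G.interedges (G.outerBoundary S) (G.outerBoundary S)ᶜ)
      = #(G.interedges (G.outerBoundary S) S)
        + #(G.interedges (G.outerBoundary S) (S ∪ G.outerBoundary S)ᶜ) := by
  rw [← card_union_of_disjoint
    (G.interedges_disjoint_right _ (disjoint_compl_right.mono_left subset_union_left))]
  have hSD := Finset.disjoint_left.1 (G.disjoint_outerBoundary S)
  congr 1
  ext ⟨x, y⟩
  simp only [mem_interedges_iff, mem_union, mem_compl]
  have := @hSD y
  tauto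

lemma one_add_card_interedges_div_le (hD : (G.outerBoundary S).Nonempty) :
    1 + (#(G.interedges (S ∪ G.outerBoundary S) (S ∪ G.outerBoundary S)ᶜ) : ℝ)
        / (#S + #(G.outerBoundary S))
      ≤ #(G.interedges (G.outerBoundary S) (G.outerBoundary S)ᶜ) / #(G.outerBoundary S) := by
  rw [card_interedges_union_outerBoundary_compl, card_interedges_outerBoundary_compl]
  set D := G.outerBoundary S
  have hb : (0 : ℝ) < #D := by exact_mod_cast hD.card_pos
  have ha : (#D : ℝ) ≤ #(G.interedges D S) := by
    exact_mod_cast G.card_outerBoundary_le_card_interedges S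
  set r : ℝ := (#(G.interedges D (S ∪ D)ᶜ) : ℝ)
  calc 1 + r / (#S + #D) ≤ 1 + r / #D := by
        gcongr
        exact le_add_of_nonneg_left (Nat.cast_nonneg _)
    _ ≤ _ := by
      rw [Nat.cast_add, add_div]
      gcongr
      rwa [one_le_div hb]

end SimpleGraph

theorem stmt6_general (n : ℕ) (G : SimpleGraph (Fin n)) [DecidableRel G.Adj]
    (hconn : G.Connected)
    (hL : (G.lapMatrix ℝ).IsHermitian)
    (lam : Fin n → ℝ) (σ : Equiv.Perm (Fin n))
    (hlam : lam = hL.eigenvalues ∘ σ)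
    (hlamAnti : ∀ i j : Fin n, i ≤ j → lam j ≤ lam i)
    (d : Fin n → ℝ) (τ : Equiv.Perm (Fin n))
    (hd : d = (fun v => (G.degree v : ℝ)) ∘ τ)
    (m : ℕ) (hm0 : 0 < m) (hmn : m < n) :
    (∑ i ∈ Finset.filter (fun i : Fin n => (i : ℕ) < m) Finset.univ, d i) + 1 ≤
      ∑ i ∈ Finset.filter (fun i : Fin n => (i : ℕ) < m) Finset.univ, lam i := by
  set S := (univ.filter fun i : Fin n => (i : ℕ) < m).map τ.toEmbedding
  have hS : #S = m := by simp [S, Fin.card_filter_val_lt, hmn.le]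
  have hD : (G.outerBoundary S).Nonempty := hconn.outerBoundary_nonempty (v := τ ⟨0, by omega⟩)
    (w := τ ⟨m, hmn⟩) (by simp [S, hm0]) (by simp [S])
  have hz : indicatorFrameCoeffs S (G.outerBoundary S) ≠ 0 := Function.ne_iff.2
    ⟨none, by simp [indicatorFrameCoeffs, hD.card_pos.ne']⟩
  have hfan := hL.trace_sub_div_le_sum hlam hlamAnti
    (conjTranspose_indicatorFrame_mul_self (G.disjoint_outerBoundary S) hD)
    (by rw [Fintype.card_option, Fintype.card_coe, hS]; omega) hz
  rw [trace_conjTranspose_indicatorFrame_mul_mul, indicatorFrame_mulVec_coeffs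
    (G.disjoint_outerBoundary S), dotProduct_indicatorFrameCoeffs,
    G.indicator_dotProduct_lapMatrix_mulVec, G.indicator_dotProduct_lapMatrix_mulVec,
    Fintype.card_option, Fintype.card_coe, hS] at hfan
  simp only [G.lapMatrix_apply_self_s6, Nat.add_lt_add_iff_right] at hfan
  have hdeg : ∑ i ∈ univ.filter (fun i : Fin n => (i : ℕ) < m), d i
      = ∑ v ∈ S, (G.degree v : ℝ) := by
    rw [hd, sum_map]; rfl
  have hcount := G.one_add_card_interedges_div_le S hD
  rw [hS] at hcount
  linarith

/-- Grone's theorem: for a connected graph and `0 < m < n`,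
`∑_{i≤m} λᵢ ≥ ∑_{i≤m} dᵢ + 1`. -/
theorem stmt6 (n : ℕ) (hn : 1 < n) (G : SimpleGraph (Fin n)) [DecidableRel G.Adj]
    (hconn : G.Connected)
    (hL : (G.lapMatrix ℝ).IsHermitian)
    (lam : Fin n → ℝ) (σ : Equiv.Perm (Fin n))
    (hlam : lam = hL.eigenvalues ∘ σ)
    (hlamAnti : ∀ i j : Fin n, i ≤ j → lam j ≤ lam i)
    (d : Fin n → ℝ) (τ : Equiv.Perm (Fin n))
    (hd : d = (fun v => (G.degree v : ℝ)) ∘ τ)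
    (hdAnti : ∀ i j : Fin n, i ≤ j → d j ≤ d i)
    (m : ℕ) (hm0 : 0 < m) (hmn : m < n) :
    (∑ i ∈ Finset.filter (fun i : Fin n => (i : ℕ) < m) Finset.univ, d i) + 1 ≤
      ∑ i ∈ Finset.filter (fun i : Fin n => (i : ℕ) < m) Finset.univ, lam i :=
  stmt6_general n G hconn hL lam σ hlam hlamAnti d τ hd m hm0 hmn
end

section
/- Let G be a connected finite simple graph on n vertices with Laplacian eigenvalues λ₁ ≥ ⋯ ≥ λₙ and degrees d₁ ≥ ⋯ ≥ dₙ. Then the edge-connectivity κₑ(G) satisfies κₑ(G) ≤ min over 0 < m < n of (n − m)·∑_{i=1}^{m}(λᵢ − dᵢ). -/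
/-!
Let `S` be the set of the `n - m` vertices carrying the degrees `d_{m+1}, …, d_n`, and let `P` be
the orthogonal projection onto `span 𝟙 ⊕ {x supported on S | x ⊥ 𝟙_S}`, a projection of rank `|S|`.
By Ky Fan's principle the `|S|` smallest Laplacian eigenvalues sum to at most
`tr (L P) = ∑_{v ∈ S} d_v - |∂S| / |S|`. Subtracting this from `tr L = ∑ λᵢ = ∑ dᵢ` gives
`∑_{i ≤ m} (λᵢ - dᵢ) ≥ |∂S| / (n - m) ≥ κₑ / (n - m)`.
-/

open Finset

open Matrix

theorem Finset.sum_le_sum_mul_of_le_of_le {ι : Type*} [Fintype ι]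
    {B : Finset ι} {f c : ι → ℝ} (t : ℝ) (hB : ∀ i ∈ B, f i ≤ t) (hBc : ∀ i ∉ B, t ≤ f i)
    (hc0 : ∀ i, 0 ≤ c i) (hc1 : ∀ i, c i ≤ 1) (hc : ∑ i, c i = #B) :
    ∑ i ∈ B, f i ≤ ∑ i, f i * c i := by
  classical
  -- `f i - t` and `c i - 𝟙_B i` have the same sign
  have key : 0 ≤ ∑ i, (f i - t) * (c i - if i ∈ B then 1 else 0) := by
    refine sum_nonneg fun i _ => ?_
    by_cases hi : i ∈ B
    · simp only [hi, if_true]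
      exact mul_nonneg_of_nonpos_of_nonpos (by linarith [hB i hi]) (by linarith [hc1 i])
    · simp only [hi, if_false, sub_zero]
      exact mul_nonneg (by linarith [hBc i hi]) (hc0 i)
  have expand : ∑ i, (f i - t) * (c i - if i ∈ B then 1 else 0) =
      ∑ i, f i * c i - ∑ i ∈ B, f i - t * (∑ i, c i - #B) := by
    simp only [mul_sub, sub_mul, sum_sub_distrib, mul_ite, mul_one, mul_zero, sum_ite_mem,
      univ_inter, ← mul_sum, sum_const, nsmul_eq_mul]
    ring
  rw [expand, hc, sub_self, mul_zero, sub_zero] at key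
  linarith

namespace Matrix.IsHermitian

variable {ι : Type*} [Fintype ι] [DecidableEq ι] {A : Matrix ι ι ℝ} (hA : A.IsHermitian)

theorem trace_mul_eq_sum_eigenvalues_mul (P : Matrix ι ι ℝ) :
    (A * P).trace = ∑ i, hA.eigenvalues i *
      ((hA.eigenvectorUnitary : Matrix ι ι ℝ)ᴴ * P * hA.eigenvectorUnitary) i i := by
  set U : Matrix ι ι ℝ := (hA.eigenvectorUnitary : Matrix ι ι ℝ)
  have hdiag : star U * A * U = diagonal hA.eigenvalues := by
    simpa [Unitary.conjStarAlgAut_star_apply] using hA.conjStarAlgAut_star_eigenvectorUnitary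
  have hUU : U * star U = 1 := Unitary.coe_mul_star_self hA.eigenvectorUnitary
  rw [star_eq_conjTranspose] at hdiag hUU
  calc (A * P).trace = (Uᴴ * (A * P) * U).trace := by
        rw [trace_mul_cycle, hUU, Matrix.one_mul]
    _ = (Uᴴ * A * U * (Uᴴ * P * U)).trace := by
        simp only [Matrix.mul_assoc]
        rw [← Matrix.mul_assoc U, hUU, Matrix.one_mul]
    _ = _ := by
        rw [hdiag]
        simp only [trace, diag_apply, diagonal_mul]

theorem sum_eigenvalues_le_trace_mul {P : Matrix ι ι ℝ} (hP : P.PosSemidef)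
    (hP1 : (1 - P).PosSemidef) (σ : Equiv.Perm ι) {B : Finset ι} (t : ℝ)
    (hB : ∀ j ∈ B, hA.eigenvalues (σ j) ≤ t) (hBc : ∀ j ∉ B, t ≤ hA.eigenvalues (σ j))
    (htr : P.trace = #B) :
    ∑ j ∈ B, hA.eigenvalues (σ j) ≤ (A * P).trace := by
  set U : Matrix ι ι ℝ := (hA.eigenvectorUnitary : Matrix ι ι ℝ)
  have hUU : U * star U = 1 := Unitary.coe_mul_star_self hA.eigenvectorUnitary
  have hU : star U * U = 1 := Unitary.coe_star_mul_self hA.eigenvectorUnitary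
  rw [star_eq_conjTranspose] at hUU hU
  set Q := Uᴴ * P * U
  have hQ0 : ∀ i, 0 ≤ Q i i := fun i => (hP.conjTranspose_mul_mul_same U).diag_nonneg
  have hQ1 : ∀ i, Q i i ≤ 1 := by
    intro i
    have h := ((hP1.conjTranspose_mul_mul_same U).diag_nonneg (i := i))
    rw [Matrix.mul_sub, Matrix.sub_mul, Matrix.mul_one, hU, sub_apply, one_apply_eq] at h
    linarith
  have hQtr : ∑ i, Q i i = #B := by
    change Q.trace = _
    rw [← htr, trace_mul_cycle, hUU, Matrix.one_mul]
  rw [hA.trace_mul_eq_sum_eigenvalues_mul, ← Equiv.sum_comp σ]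
  exact sum_le_sum_mul_of_le_of_le t hB hBc (fun j => hQ0 (σ j)) (fun j => hQ1 (σ j))
    (by rw [Equiv.sum_comp σ (fun i => Q i i), hQtr])

end Matrix.IsHermitian

section CutTestMatrix

variable {ι : Type*} [Fintype ι] [DecidableEq ι]

def Finset.indicatorVec (S : Finset ι) : ι → ℝ := fun v => if v ∈ S then 1 else 0

theorem Finset.dotProduct_indicatorVec (S : Finset ι) (x : ι → ℝ) :
    x ⬝ᵥ S.indicatorVec = ∑ v ∈ S, x v := by
  simp [dotProduct, indicatorVec, mul_ite, sum_ite_mem]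

theorem Finset.indicatorVec_dotProduct (S : Finset ι) (x : ι → ℝ) :
    S.indicatorVec ⬝ᵥ x = ∑ v ∈ S, x v := by
  rw [dotProduct_comm, dotProduct_indicatorVec]

/-- `diagonal 𝟙_S - 𝟙_S 𝟙_Sᵀ / |S|` projects onto the vectors supported on `S` and orthogonal to
`𝟙_S`, and `𝟙 𝟙ᵀ / n` onto `span 𝟙`; their ranges are orthogonal. -/
noncomputable def cutTestMatrix (S : Finset ι) : Matrix ι ι ℝ :=
  diagonal S.indicatorVec - (#S : ℝ)⁻¹ • vecMulVec S.indicatorVec S.indicatorVec +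
    (Fintype.card ι : ℝ)⁻¹ • vecMulVec 1 1

theorem dotProduct_cutTestMatrix_mulVec (S : Finset ι) (x : ι → ℝ) :
    x ⬝ᵥ (cutTestMatrix S *ᵥ x) = ∑ v ∈ S, x v ^ 2 - (#S : ℝ)⁻¹ * (∑ v ∈ S, x v) ^ 2 +
      (Fintype.card ι : ℝ)⁻¹ * (∑ v, x v) ^ 2 := by
  have hdiag : x ⬝ᵥ (diagonal S.indicatorVec *ᵥ x) = ∑ v ∈ S, x v ^ 2 := by
    simp [dotProduct, indicatorVec, mulVec_diagonal, sq, sum_ite_mem]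
  simp only [cutTestMatrix, add_mulVec, sub_mulVec, smul_mulVec, dotProduct_add,
    dotProduct_sub, dotProduct_smul, dotProduct_mulVec x (vecMulVec _ _), vecMul_vecMulVec,
    smul_dotProduct, hdiag, dotProduct_indicatorVec, indicatorVec_dotProduct, dotProduct_one,
    one_dotProduct, smul_eq_mul]
  ring

theorem isHermitian_cutTestMatrix (S : Finset ι) : (cutTestMatrix S).IsHermitian := by
  ext i j
  by_cases h : i = j
  · subst h; rfl
  · simp [cutTestMatrix, diagonal_apply_ne _ h, diagonal_apply_ne _ (Ne.symm h), vecMulVec_apply,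
      mul_comm]

theorem posSemidef_cutTestMatrix (S : Finset ι) : (cutTestMatrix S).PosSemidef := by
  refine .of_dotProduct_mulVec_nonneg (isHermitian_cutTestMatrix S) fun x => ?_
  rw [star_trivial, dotProduct_cutTestMatrix_mulVec]
  have hcs : (#S : ℝ)⁻¹ * (∑ v ∈ S, x v) ^ 2 ≤ ∑ v ∈ S, x v ^ 2 := by
    rcases S.eq_empty_or_nonempty with rfl | hS
    · simp
    rw [inv_mul_le_iff₀ (by positivity)]
    exact sq_sum_le_card_mul_sum_sq
  have : 0 ≤ (Fintype.card ι : ℝ)⁻¹ * (∑ v, x v) ^ 2 := by positivity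
  linarith

theorem posSemidef_one_sub_cutTestMatrix {S : Finset ι} (hS : S.Nonempty) (hSc : Sᶜ.Nonempty) :
    (1 - cutTestMatrix S).PosSemidef := by
  refine .of_dotProduct_mulVec_nonneg (isHermitian_one.sub (isHermitian_cutTestMatrix S))
    fun x => ?_
  rw [star_trivial, sub_mulVec, one_mulVec, dotProduct_sub, dotProduct_cutTestMatrix_mulVec,
    sub_nonneg]
  set p := ∑ v ∈ S, x v
  set r := ∑ v ∈ Sᶜ, x v
  set k : ℝ := (#S : ℝ)
  set l : ℝ := (#Sᶜ : ℝ)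
  have hk : 0 < k := by simpa [k] using hS.card_pos
  have hl : 0 < l := by simpa [l] using hSc.card_pos
  have hcard : (Fintype.card ι : ℝ) = k + l := by
    rw [← card_add_card_compl S]; push_cast; rfl
  have hsum : ∑ v, x v = p + r := (sum_add_sum_compl S x).symm
  have hsq : x ⬝ᵥ x = ∑ v ∈ S, x v ^ 2 + ∑ v ∈ Sᶜ, x v ^ 2 := by
    rw [sum_add_sum_compl S, dotProduct]; simp only [sq]
  have hcs : r ^ 2 ≤ l * ∑ v ∈ Sᶜ, x v ^ 2 := sq_sum_le_card_mul_sum_sq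
  have engel : (p + r) ^ 2 / (k + l) ≤ p ^ 2 / k + r ^ 2 / l := by
    rw [div_add_div _ _ hk.ne' hl.ne', div_le_div_iff₀ (by positivity) (by positivity)]
    nlinarith [sq_nonneg (l * p - k * r), mul_pos hk hl]
  have hrl : r ^ 2 / l ≤ ∑ v ∈ Sᶜ, x v ^ 2 := by rwa [div_le_iff₀' hl]
  rw [hcard, hsum, hsq, inv_mul_eq_div, inv_mul_eq_div]
  linarith

theorem trace_cutTestMatrix {S : Finset ι} (hS : S.Nonempty) :
    (cutTestMatrix S).trace = #S := by
  have hk : (#S : ℝ) ≠ 0 := by simpa using hS.card_pos.ne'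
  have hn : (Fintype.card ι : ℝ) ≠ 0 := by simpa using (hS.card_pos.trans_le (card_le_univ S)).ne'
  simp only [cutTestMatrix, trace_add, trace_sub, trace_smul, trace_diagonal, trace_vecMulVec,
    indicatorVec_dotProduct, smul_eq_mul]
  simp [indicatorVec, hk, hn]

end CutTestMatrix

namespace SimpleGraph

variable {n : ℕ} (G : SimpleGraph (Fin n)) [DecidableRel G.Adj]

theorem edgeBoundary_eq_sum (U : Finset (Fin n)) :
    edgeBoundary G U = ∑ u ∈ U, #{w ∈ G.neighborFinset u | w ∉ U} := by
  simp only [edgeBoundary, card_filter, ite_and, ite_not, Fintype.sum_prod_type, sum_ite_irrel,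
    sum_const_zero, sum_ite_mem, univ_inter, neighborFinset_eq_filter, sum_filter]
  refine sum_congr rfl fun u _ => sum_congr rfl fun w _ => ?_
  split_ifs <;> rfl

theorem lapMatrix_mulVec_indicatorVec_apply {U : Finset (Fin n)} {u : Fin n} (hu : u ∈ U) :
    (G.lapMatrix ℝ *ᵥ U.indicatorVec) u = #{w ∈ G.neighborFinset u | w ∉ U} := by
  rw [lapMatrix_mulVec_apply, ← card_neighborFinset_eq_degree,
    ← card_filter_add_card_filter_not (fun w => w ∈ U)]
  simp only [indicatorVec, hu, if_true, mul_one, sum_boole]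
  push_cast
  ring

theorem indicatorVec_dotProduct_lapMatrix_mulVec (U : Finset (Fin n)) :
    U.indicatorVec ⬝ᵥ (G.lapMatrix ℝ *ᵥ U.indicatorVec) = edgeBoundary G U := by
  rw [dotProduct_comm, dotProduct_indicatorVec, edgeBoundary_eq_sum, Nat.cast_sum]
  exact sum_congr rfl fun u hu => G.lapMatrix_mulVec_indicatorVec_apply hu

theorem sum_eigenvalues_lapMatrix (hL : (G.lapMatrix ℝ).IsHermitian) :
    ∑ i, hL.eigenvalues i = ∑ v, (G.degree v : ℝ) := by
  have htr : (G.lapMatrix ℝ).trace = ∑ v, (G.degree v : ℝ) := by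
    simp [trace, lapMatrix, degMatrix]
  simpa [htr] using hL.trace_eq_sum_eigenvalues.symm

theorem trace_lapMatrix_mul_cutTestMatrix (S : Finset (Fin n)) :
    (G.lapMatrix ℝ * cutTestMatrix S).trace =
      ∑ v ∈ S, (G.degree v : ℝ) - (#S : ℝ)⁻¹ * edgeBoundary G S := by
  have hdiag : (G.lapMatrix ℝ * diagonal S.indicatorVec).trace = ∑ v ∈ S, (G.degree v : ℝ) := by
    simp [trace, mul_diagonal, lapMatrix, degMatrix, indicatorVec, sum_ite_mem]
  have hconst : G.lapMatrix ℝ *ᵥ 1 = 0 := G.lapMatrix_mulVec_const_eq_zero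
  simp only [cutTestMatrix, Matrix.mul_add, Matrix.mul_sub, Matrix.mul_smul, trace_add,
    trace_sub, trace_smul, hdiag, mul_vecMulVec, trace_vecMulVec, hconst, zero_dotProduct,
    dotProduct_comm (G.lapMatrix ℝ *ᵥ _), indicatorVec_dotProduct_lapMatrix_mulVec,
    smul_eq_mul, mul_zero, add_zero]

theorem sum_eigenvalues_le_sum_degree_sub_edgeBoundary (hL : (G.lapMatrix ℝ).IsHermitian)
    (σ : Equiv.Perm (Fin n)) {B S : Finset (Fin n)} (t : ℝ)
    (hB : ∀ j ∈ B, hL.eigenvalues (σ j) ≤ t) (hBc : ∀ j ∉ B, t ≤ hL.eigenvalues (σ j))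
    (hS : S.Nonempty) (hSc : Sᶜ.Nonempty) (hcard : #S = #B) :
    ∑ j ∈ B, hL.eigenvalues (σ j) ≤
      ∑ v ∈ S, (G.degree v : ℝ) - (#S : ℝ)⁻¹ * edgeBoundary G S := by
  rw [← trace_lapMatrix_mul_cutTestMatrix]
  exact hL.sum_eigenvalues_le_trace_mul (posSemidef_cutTestMatrix S)
    (posSemidef_one_sub_cutTestMatrix hS hSc) σ t hB hBc (by rw [trace_cutTestMatrix hS, hcard])

end SimpleGraph

theorem stmt12_general (n : ℕ) (G : SimpleGraph (Fin n)) [DecidableRel G.Adj]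
    (hL : (G.lapMatrix ℝ).IsHermitian)
    (lam : Fin n → ℝ) (σ : Equiv.Perm (Fin n))
    (hlam : lam = hL.eigenvalues ∘ σ)
    (hlamAnti : ∀ i j : Fin n, i ≤ j → lam j ≤ lam i)
    (d : Fin n → ℝ) (τ : Equiv.Perm (Fin n))
    (hd : d = (fun v => (G.degree v : ℝ)) ∘ τ)
    (κ : ℕ)
    (hκ : IsLeast {c : ℕ | ∃ U : Finset (Fin n),
      U.Nonempty ∧ U ≠ Finset.univ ∧ c = edgeBoundary G U} κ) :
    ∀ m : ℕ, 0 < m → m < n →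
      (κ : ℝ) ≤ ((n : ℝ) - m) *
        ∑ i ∈ Finset.filter (fun i : Fin n => (i : ℕ) < m) Finset.univ, (lam i - d i) := by
  intro m hm hmn
  subst hlam hd
  set A := univ.filter fun i : Fin n => (i : ℕ) < m
  set S := Aᶜ.map τ.toEmbedding
  have hS : S.Nonempty := ⟨τ ⟨m, hmn⟩, by simp [S, A]⟩
  have hSc : Sᶜ.Nonempty := ⟨τ ⟨0, hm.trans hmn⟩, by simp [S, A, hm.ne']⟩
  have hcard : (#S : ℝ) = n - m := by
    rw [card_map, card_compl, Fin.card_filter_val_lt, min_eq_right hmn.le, Fintype.card_fin,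
      Nat.cast_sub hmn.le]
  have hκS : (κ : ℝ) ≤ edgeBoundary G S := by
    exact_mod_cast hκ.2 ⟨S, hS, fun h => by simp [h] at hSc, rfl⟩
  have hcut : ∑ j ∈ Aᶜ, hL.eigenvalues (σ j) ≤
      ∑ j ∈ Aᶜ, (G.degree (τ j) : ℝ) - (#S : ℝ)⁻¹ * edgeBoundary G S := by
    simpa [S] using G.sum_eigenvalues_le_sum_degree_sub_edgeBoundary hL σ
      (hL.eigenvalues (σ ⟨m, hmn⟩)) (B := Aᶜ)
      (fun j hj => hlamAnti _ _ (by simpa [A, Fin.le_iff_val_le_val] using hj))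
      (fun j hj => hlamAnti _ _ (by simp [A, Fin.le_iff_val_le_val] at hj ⊢; omega)) hS hSc
      (card_map _)
  have htrace : ∑ j, hL.eigenvalues (σ j) = ∑ j, (G.degree (τ j) : ℝ) := by
    rw [Equiv.sum_comp σ hL.eigenvalues, Equiv.sum_comp τ (fun v => (G.degree v : ℝ)),
      G.sum_eigenvalues_lapMatrix hL]
  have hgap : (#S : ℝ)⁻¹ * edgeBoundary G S ≤
      ∑ i ∈ A, (hL.eigenvalues (σ i) - (G.degree (τ i) : ℝ)) := by
    rw [sum_sub_distrib]
    linarith [sum_add_sum_compl A fun j => hL.eigenvalues (σ j),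
      sum_add_sum_compl A fun j => (G.degree (τ j) : ℝ)]
  calc (κ : ℝ) ≤ edgeBoundary G S := hκS
    _ = #S * ((#S : ℝ)⁻¹ * edgeBoundary G S) := by
        field_simp [show (#S : ℝ) ≠ 0 by exact_mod_cast hS.card_pos.ne']
    _ ≤ (n - m) * ∑ i ∈ A, (hL.eigenvalues (σ i) - (G.degree (τ i) : ℝ)) := by
        rw [← hcard]; gcongr

/-- The edge-connectivity (minimum size of a cut `∂(U,Ū)` over proper nonempty
`U`) satisfies `κₑ(G) ≤ (n-m) ∑_{i≤m} (λᵢ - dᵢ)` for every `0 < m < n`. -/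
theorem stmt12 (n : ℕ) (G : SimpleGraph (Fin n)) [DecidableRel G.Adj]
    (hconn : G.Connected)
    (hL : (G.lapMatrix ℝ).IsHermitian)
    (lam : Fin n → ℝ) (σ : Equiv.Perm (Fin n))
    (hlam : lam = hL.eigenvalues ∘ σ)
    (hlamAnti : ∀ i j : Fin n, i ≤ j → lam j ≤ lam i)
    (d : Fin n → ℝ) (τ : Equiv.Perm (Fin n))
    (hd : d = (fun v => (G.degree v : ℝ)) ∘ τ)
    (hdAnti : ∀ i j : Fin n, i ≤ j → d j ≤ d i)
    (κ : ℕ)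
    (hκ : IsLeast {c : ℕ | ∃ U : Finset (Fin n),
      U.Nonempty ∧ U ≠ Finset.univ ∧ c = edgeBoundary G U} κ) :
    ∀ m : ℕ, 0 < m → m < n →
      (κ : ℝ) ≤ ((n : ℝ) - m) *
        ∑ i ∈ Finset.filter (fun i : Fin n => (i : ℕ) < m) Finset.univ, (lam i - d i) :=
  stmt12_general n G hL lam σ hlam hlamAnti d τ hd κ hκ
end

section
/- Let G be a finite simple graph with n vertices and e edges. For any 0 < m < n, there exists a vertex subset U with |U| = m such that |∂(U, Ū)| ≥ 2em(n−m)/(n(n−1)), and there exists a vertex subset U′ with |U′| = m such that |∂(U′, Ū′)| ≤ 2em(n−m)/(n(n−1)). -/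
/-!
Average over all `m`-subsets `U`. An edge `ab`, read as the ordered pair `(a, b)`, is counted by
exactly those `U` with `a ∈ U`, `b ∉ U`, and there are `C(n-2, m-1)` of them; so the boundary sizes
sum to `2e·C(n-2, m-1)`. Since `m(n-m)·C(n, m) = n(n-1)·C(n-2, m-1)`, their mean is
`2em(n-m)/(n(n-1))`, so some `U` reaches it from above and some from below.
-/

open Finset

theorem Nat.add_one_mul_sub_mul_choose_add_one (n j : ℕ) :
    (j + 1) * (n - (j + 1)) * n.choose (j + 1) = n * (n - 1) * (n - 2).choose j := by
  obtain _ | _ | k := n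
  · simp
  · simp
  have h1 := Nat.choose_mul_succ_eq k j
  have h2 := Nat.add_one_mul_choose_eq (k + 1) j
  calc (j + 1) * (k + 2 - (j + 1)) * (k + 2).choose (j + 1)
      = (k + 1 - j) * ((k + 2).choose (j + 1) * (j + 1)) := by
        rw [show k + 2 - (j + 1) = k + 1 - j by omega]; ring
    _ = (k + 2) * ((k + 1).choose j * (k + 1 - j)) := by rw [← h2]; ring
    _ = (k + 2) * (k + 1) * k.choose j := by rw [← h1]; ring

theorem Finset.exists_le_and_exists_ge_of_sum_eq_card_mul {ι : Type*} {s : Finset ι}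
    (hs : s.Nonempty) {f : ι → ℝ} {t : ℝ} (h : ∑ i ∈ s, f i = #s * t) :
    (∃ i ∈ s, t ≤ f i) ∧ ∃ i ∈ s, f i ≤ t := by
  have hsum : ∑ _i ∈ s, t = ∑ i ∈ s, f i := by rw [sum_const, nsmul_eq_mul, h]
  exact ⟨exists_le_of_sum_le hs hsum.le, exists_le_of_sum_le hs hsum.ge⟩

theorem Finset.card_powersetCard_filter_mem_and_notMem {α : Type*} [Fintype α] [DecidableEq α]
    {a b : α} (hab : a ≠ b) (m : ℕ) :
    #{U ∈ powersetCard (m + 1) (univ : Finset α) | a ∈ U ∧ b ∉ U} =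
      (Fintype.card α - 2).choose m := by
  have hcard : #(univ \ {a, b} : Finset α) = Fintype.card α - 2 := by
    rw [card_sdiff_of_subset (subset_univ _), card_pair hab, card_univ]
  rw [← hcard, ← card_powersetCard]
  refine card_nbij' (fun U => U.erase a) (insert a) ?_ ?_ ?_ ?_
  · intro U hU
    simp only [coe_filter, mem_powersetCard_univ, Set.mem_ofPred_eq] at hU
    rw [mem_coe, mem_powersetCard, card_erase_of_mem hU.2.1, hU.1]
    refine ⟨fun x hx => ?_, rfl⟩
    grind
  · intro V hV
    rw [mem_coe, mem_powersetCard, subset_sdiff] at hV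
    simp only [coe_filter, mem_powersetCard_univ, Set.mem_ofPred_eq]
    grind
  · intro U hU
    simp only [coe_filter, Set.mem_ofPred_eq] at hU
    exact insert_erase hU.2.1
  · intro V hV
    rw [mem_coe, mem_powersetCard, subset_sdiff] at hV
    exact erase_insert (by grind)

theorem sum_edgeBoundary_powersetCard {n : ℕ} (G : SimpleGraph (Fin n)) [DecidableRel G.Adj]
    (m : ℕ) :
    ∑ U ∈ powersetCard (m + 1) univ, edgeBoundary G U =
      2 * #G.edgeFinset * (n - 2).choose m := by
  calc ∑ U ∈ powersetCard (m + 1) univ, edgeBoundary G U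
      = ∑ p : Fin n × Fin n,
          #{U ∈ powersetCard (m + 1) univ | p.1 ∈ U ∧ p.2 ∉ U ∧ G.Adj p.1 p.2} := by
        simp only [edgeBoundary, card_filter]
        exact sum_comm
    _ = ∑ p : Fin n × Fin n, if G.Adj p.1 p.2 then (n - 2).choose m else 0 := by
        refine sum_congr rfl fun p _ => ?_
        split_ifs with hp
        · simp only [hp, and_true]
          rw [card_powersetCard_filter_mem_and_notMem hp.ne, Fintype.card_fin]
        · simp [hp]
    _ = 2 * #G.edgeFinset * (n - 2).choose m := by
        rw [sum_ite, sum_const_zero, sum_const, smul_eq_mul, add_zero, G.two_mul_card_edgeFinset]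

/-- Averaging: for every `0 < m < n` there are `m`-sets `U`, `U'` with
`|∂(U,Ū)| ≥ 2em(n-m)/(n(n-1))` and `|∂(U',Ū')| ≤ 2em(n-m)/(n(n-1))`. -/
theorem stmt13 (n : ℕ) (G : SimpleGraph (Fin n)) [DecidableRel G.Adj]
    (e : ℕ) (he : e = G.edgeFinset.card)
    (m : ℕ) (hm0 : 0 < m) (hmn : m < n) :
    (∃ U : Finset (Fin n), U.card = m ∧
      2 * (e : ℝ) * m * ((n : ℝ) - m) / ((n : ℝ) * ((n : ℝ) - 1)) ≤
        (edgeBoundary G U : ℝ)) ∧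
    (∃ U' : Finset (Fin n), U'.card = m ∧
      (edgeBoundary G U' : ℝ) ≤
        2 * (e : ℝ) * m * ((n : ℝ) - m) / ((n : ℝ) * ((n : ℝ) - 1))) := by
  obtain ⟨j, rfl⟩ : ∃ j, m = j + 1 := ⟨m - 1, by omega⟩
  have hne : (powersetCard (j + 1) (univ : Finset (Fin n))).Nonempty :=
    powersetCard_nonempty.2 (by simp; omega)
  have hpos : (0 : ℝ) < n * (n - 1) := by
    have : (2 : ℝ) ≤ n := by exact_mod_cast (by omega : 2 ≤ n)
    nlinarith
  have hchoose := congrArg (Nat.cast (R := ℝ)) (Nat.add_one_mul_sub_mul_choose_add_one n j)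
  push_cast [Nat.cast_sub hmn.le, Nat.cast_sub (by omega : 1 ≤ n)] at hchoose
  have hmean : ∑ U ∈ powersetCard (j + 1) univ, (edgeBoundary G U : ℝ) =
      #(powersetCard (j + 1) (univ : Finset (Fin n))) *
        (2 * (e : ℝ) * ↑(j + 1) * ((n : ℝ) - ↑(j + 1)) / ((n : ℝ) * ((n : ℝ) - 1))) := by
    rw [← Nat.cast_sum, sum_edgeBoundary_powersetCard, ← he, card_powersetCard, card_univ,
      Fintype.card_fin, mul_div_assoc', eq_div_iff hpos.ne']
    push_cast
    linear_combination (-2 * (e : ℝ)) * hchoose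
  simpa only [mem_powersetCard_univ] using exists_le_and_exists_ge_of_sum_eq_card_mul hne hmean
end

section
/- Let G be a connected finite simple graph on n vertices with Laplacian eigenvalues λ₁ ≥ ⋯ ≥ λₙ and degrees d₁ ≥ ⋯ ≥ dₙ. Then the isoperimetric number satisfies i(G) ≤ min over n/2 ≤ m < n of ∑_{i=1}^{m}(λᵢ − dᵢ). -/
/-!
Let `k = n - m`, so `1 ≤ k ≤ n/2`, and let `C` be the `k` vertices carrying the degrees
`d_{m+1}, …, d_n`.
The matrix `P = J/n + I_C - J_C/k` satisfies `0 ≤ P ≤ I` and `tr P = k`, so by Ky Fan's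
principle the sum of the `k` smallest Laplacian eigenvalues is at most
`tr (L P) = ∑_{v ∈ C} d_v - |∂C|/k`. Since `∑ λᵢ = tr L = ∑ dᵢ`, this says exactly that
`i(G) ≤ |∂C|/k ≤ ∑_{i ≤ m} (λᵢ - dᵢ)`.
-/

open Finset

open Matrix

theorem Fin.card_compl_filter_val_lt {n m : ℕ} (hm : m ≤ n) :
    #(univ.filter fun i : Fin n => (i : ℕ) < m)ᶜ = n - m := by
  rw [card_compl, Fin.card_filter_val_lt, Fintype.card_fin, min_eq_right hm]

theorem Finset.sum_le_sum_mul_of_threshold {ι : Type*} [Fintype ι]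
    (s : Finset ι) (f c : ι → ℝ) (t : ℝ) (hs : ∀ i ∈ s, f i ≤ t) (hsc : ∀ i ∉ s, t ≤ f i)
    (hc0 : ∀ i, 0 ≤ c i) (hc1 : ∀ i, c i ≤ 1) (hc : ∑ i, c i = #s) :
    ∑ i ∈ s, f i ≤ ∑ i, f i * c i := by
  classical
  have hterm : ∀ i, 0 ≤ (f i - t) * (c i - if i ∈ s then 1 else 0) := by
    intro i
    split_ifs with hi
    · exact mul_nonneg_of_nonpos_of_nonpos (by linarith [hs i hi]) (by linarith [hc1 i])
    · exact mul_nonneg (by linarith [hsc i hi]) (by linarith [hc0 i])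
  have hsum : ∑ i, (f i - t) * (c i - if i ∈ s then 1 else 0)
      = ∑ i, f i * c i - ∑ i ∈ s, f i - t * (∑ i, c i - #s) := by
    simp only [sub_mul, mul_sub, mul_ite, mul_one, mul_zero, sum_sub_distrib, ← sum_filter,
      ← mul_sum, filter_mem_eq_inter, univ_inter, sum_const, nsmul_eq_mul]
    ring
  rw [hc, sub_self, mul_zero, sub_zero] at hsum
  linarith [sum_nonneg fun i (_ : i ∈ univ) => hterm i]

namespace Matrix

variable {ι : Type*} [Fintype ι]

theorem trace_eq_sum_dotProduct_mulVec (M : Matrix ι ι ℝ)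
    (b : OrthonormalBasis ι ℝ (EuclideanSpace ℝ ι)) :
    M.trace = ∑ i, ⇑(b i) ⬝ᵥ (M *ᵥ ⇑(b i)) := by
  classical
  have h := LinearMap.trace_eq_sum_inner (toEuclideanLin M) b
  rw [LinearMap.trace_eq_matrix_trace ℝ (EuclideanSpace.basisFun ι ℝ).toBasis,
    toEuclideanLin_eq_toLin_orthonormal, LinearMap.toMatrix_toLin,
    ← toEuclideanLin_eq_toLin_orthonormal] at h
  simpa [EuclideanSpace.inner_eq_star_dotProduct, dotProduct_comm] using h

namespace IsHermitian

variable [DecidableEq ι]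

/-- Ky Fan's minimum principle: in an orthonormal eigenbasis `(vᵢ)` of `A`,
`tr (A P) = ∑ λᵢ cᵢ` with weights `cᵢ = ⟪vᵢ, P vᵢ⟫ ∈ [0, 1]` summing to `tr P`. -/
theorem sum_eigenvalues_le_trace_mul_s17 {A P : Matrix ι ι ℝ} (hA : A.IsHermitian)
    (hP0 : ∀ v, 0 ≤ v ⬝ᵥ P *ᵥ v) (hP1 : ∀ v, v ⬝ᵥ P *ᵥ v ≤ v ⬝ᵥ v)
    (s : Finset ι) (hPs : P.trace = #s) (t : ℝ) (hs : ∀ i ∈ s, hA.eigenvalues i ≤ t)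
    (hsc : ∀ i ∉ s, t ≤ hA.eigenvalues i) :
    ∑ i ∈ s, hA.eigenvalues i ≤ (A * P).trace := by
  set b := hA.eigenvectorBasis
  have hunit : ∀ i, ⇑(b i) ⬝ᵥ ⇑(b i) = 1 := fun i => by
    simpa only [EuclideanSpace.inner_eq_star_dotProduct, star_trivial] using b.inner_eq_one i
  have htrace : (A * P).trace = ∑ i, hA.eigenvalues i * (⇑(b i) ⬝ᵥ P *ᵥ ⇑(b i)) := by
    rw [trace_mul_comm, trace_eq_sum_dotProduct_mulVec _ b]
    simp [← mulVec_mulVec, b, hA.mulVec_eigenvectorBasis, mulVec_smul, dotProduct_smul]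
  rw [htrace]
  refine sum_le_sum_mul_of_threshold s _ _ t hs hsc (fun i => hP0 _)
    (fun i => (hP1 _).trans_eq (hunit i)) ?_
  rw [← hPs, trace_eq_sum_dotProduct_mulVec P b]

theorem sum_smallest_eigenvalues_le_trace_mul {n m : ℕ} {A P : Matrix (Fin n) (Fin n) ℝ}
    (hA : A.IsHermitian) (σ : Equiv.Perm (Fin n)) (hσ : Antitone (hA.eigenvalues ∘ σ))
    (hP0 : ∀ v, 0 ≤ v ⬝ᵥ P *ᵥ v) (hP1 : ∀ v, v ⬝ᵥ P *ᵥ v ≤ v ⬝ᵥ v) (hm : m < n)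
    (hP : P.trace = (n - m : ℕ)) :
    ∑ i ∈ (univ.filter fun i : Fin n => (i : ℕ) < m)ᶜ, hA.eigenvalues (σ i) ≤ (A * P).trace := by
  set T := (univ.filter fun i : Fin n => (i : ℕ) < m)ᶜ
  set s := T.map σ.toEmbedding
  set t := hA.eigenvalues (σ ⟨m, hm⟩)
  have hmemT : ∀ j, j ∈ T ↔ (⟨m, hm⟩ : Fin n) ≤ j := fun j => by simp [T, Fin.le_def]
  have hs : ∀ i ∈ s, hA.eigenvalues i ≤ t := by
    intro i hi
    obtain ⟨j, hj, rfl⟩ := mem_map.1 hi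
    exact hσ ((hmemT j).1 hj)
  have hsc : ∀ i ∉ s, t ≤ hA.eigenvalues i := by
    intro i hi
    have hj : σ.symm i ∉ T := fun h => hi (mem_map.2 ⟨_, h, σ.apply_symm_apply i⟩)
    simpa using hσ (not_le.1 (mt (hmemT _).2 hj)).le
  have hPs : P.trace = #s := by rw [hP, card_map, Fin.card_compl_filter_val_lt hm.le]
  exact (sum_map T σ.toEmbedding hA.eigenvalues).symm.trans_le
    (hA.sum_eigenvalues_le_trace_mul_s17 hP0 hP1 s hPs t hs hsc)

end IsHermitian

end Matrix

theorem dotProduct_indicator_one {V : Type*} [Fintype V] (C : Finset V) (w : V → ℝ) :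
    w ⬝ᵥ (C : Set V).indicator 1 = ∑ i ∈ C, w i := by
  classical
  simp [dotProduct, Set.indicator_apply]

section BoundaryTestMatrix

variable {V : Type*} [Fintype V] [DecidableEq V]

/-- `J/n + I_C - J_C/|C|`: the orthogonal projection onto the span of the all-ones vector and
the vectors supported on `C` with zero sum. -/
noncomputable def boundaryTestMatrix (C : Finset V) : Matrix V V ℝ :=
  (Fintype.card V : ℝ)⁻¹ • vecMulVec 1 1 + diagonal ((C : Set V).indicator 1)
    - (#C : ℝ)⁻¹ • vecMulVec ((C : Set V).indicator 1) ((C : Set V).indicator 1)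

theorem dotProduct_boundaryTestMatrix_mulVec (C : Finset V) (v : V → ℝ) :
    v ⬝ᵥ boundaryTestMatrix C *ᵥ v
      = (∑ i, v i) ^ 2 / Fintype.card V + ∑ i ∈ C, v i ^ 2 - (∑ i ∈ C, v i) ^ 2 / #C := by
  have hdiag : v ⬝ᵥ diagonal ((C : Set V).indicator 1) *ᵥ v = ∑ i ∈ C, v i ^ 2 := by
    simp [dotProduct, mulVec_diagonal, Set.indicator_apply, sq]
  simp only [boundaryTestMatrix, sub_mulVec, add_mulVec, smul_mulVec, vecMulVec_mulVec,
    op_smul_eq_smul, dotProduct_sub, dotProduct_add, dotProduct_smul, hdiag, smul_eq_mul]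
  rw [dotProduct_comm, dotProduct_one, dotProduct_comm, dotProduct_indicator_one]
  ring

theorem dotProduct_boundaryTestMatrix_mulVec_nonneg (C : Finset V) (v : V → ℝ) :
    0 ≤ v ⬝ᵥ boundaryTestMatrix C *ᵥ v := by
  have hC : (∑ i ∈ C, v i) ^ 2 / #C ≤ ∑ i ∈ C, v i ^ 2 :=
    div_le_of_le_mul₀ (Nat.cast_nonneg _) (sum_nonneg fun i _ => sq_nonneg _)
      ((sq_sum_le_card_mul_sum_sq ..).trans_eq (mul_comm _ _))
  have : 0 ≤ (∑ i, v i) ^ 2 / Fintype.card V := by positivity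
  rw [dotProduct_boundaryTestMatrix_mulVec]
  linarith

theorem dotProduct_boundaryTestMatrix_mulVec_le {C : Finset V} (hC : C.Nonempty) (v : V → ℝ) :
    v ⬝ᵥ boundaryTestMatrix C *ᵥ v ≤ v ⬝ᵥ v := by
  have hk : (#C : ℝ) ≠ 0 := by simpa using hC.card_pos.ne'
  set a := ∑ i ∈ C, v i
  -- Cauchy–Schwarz for `w`, which replaces `v` on `C` by its mean there.
  set w : V → ℝ := fun i => if i ∈ C then a / #C else v i
  have hwC : ∀ i ∈ C, w i = a / #C := fun i hi => if_pos hi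
  have hwCc : ∀ i ∈ Cᶜ, w i = v i := fun i hi => if_neg (mem_compl.1 hi)
  have hw : ∑ i, w i = ∑ i, v i := by
    rw [← sum_add_sum_compl C w, sum_congr rfl hwC, sum_congr rfl hwCc, sum_const, nsmul_eq_mul,
      mul_div_cancel₀ _ hk, sum_add_sum_compl]
  have hw2 : ∑ i, w i ^ 2 = a ^ 2 / #C + ∑ i ∈ Cᶜ, v i ^ 2 := by
    rw [← sum_add_sum_compl C, sum_congr rfl fun i hi => congrArg (· ^ 2) (hwC i hi),
      sum_congr rfl fun i hi => congrArg (· ^ 2) (hwCc i hi), sum_const, nsmul_eq_mul]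
    field_simp
  have hcs : (∑ i, w i) ^ 2 / Fintype.card V ≤ ∑ i, w i ^ 2 :=
    div_le_of_le_mul₀ (Nat.cast_nonneg _) (sum_nonneg fun i _ => sq_nonneg _)
      ((sq_sum_le_card_mul_sum_sq (s := univ) (f := w)).trans_eq (by simp [mul_comm]))
  rw [hw, hw2] at hcs
  have := sum_add_sum_compl C (fun i => v i ^ 2)
  rw [dotProduct_boundaryTestMatrix_mulVec, dotProduct]
  simp only [← sq]
  linarith

theorem trace_boundaryTestMatrix {C : Finset V} (hC : C.Nonempty) :
    (boundaryTestMatrix C).trace = #C := by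
  have hV : (Fintype.card V : ℝ) ≠ 0 := by
    simpa using (hC.card_pos.trans_le (card_le_univ C)).ne'
  have hk : (#C : ℝ) ≠ 0 := by simpa using hC.card_pos.ne'
  simp only [boundaryTestMatrix, trace_sub, trace_add, trace_smul, trace_vecMulVec,
    trace_diagonal]
  simp [dotProduct, Set.indicator_apply, hV, hk]

theorem trace_lapMatrix_mul_boundaryTestMatrix (G : SimpleGraph V) [DecidableRel G.Adj]
    (C : Finset V) :
    (G.lapMatrix ℝ * boundaryTestMatrix C).trace = ∑ i ∈ C, (G.degree i : ℝ)
      - (C : Set V).indicator 1 ⬝ᵥ G.lapMatrix ℝ *ᵥ (C : Set V).indicator 1 / #C := by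
  have hconst : G.lapMatrix ℝ *ᵥ 1 = 0 := G.lapMatrix_mulVec_const_eq_zero
  simp only [boundaryTestMatrix, mul_add, mul_sub, Matrix.mul_smul, trace_add, trace_sub,
    trace_smul, mul_vecMulVec, hconst, trace_vecMulVec]
  simp [dotProduct_comm, div_eq_inv_mul, trace, mul_diagonal, Set.indicator_apply,
    SimpleGraph.lapMatrix, SimpleGraph.degMatrix]

end BoundaryTestMatrix

theorem SimpleGraph.trace_lapMatrix {V : Type*} [Fintype V] [DecidableEq V] (G : SimpleGraph V)
    [DecidableRel G.Adj] : (G.lapMatrix ℝ).trace = ∑ v, (G.degree v : ℝ) := by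
  simp [lapMatrix, degMatrix, trace_sub, trace_adjMatrix]

theorem edgeBoundary_eq_sum_card_sdiff {n : ℕ} (G : SimpleGraph (Fin n)) [DecidableRel G.Adj]
    (U : Finset (Fin n)) : edgeBoundary G U = ∑ i ∈ U, #(G.neighborFinset i \ U) := by
  simp only [edgeBoundary, card_filter, Fintype.sum_prod_type, G.neighborFinset_eq_filter,
    sdiff_eq_filter, filter_filter, ite_and, sum_ite_irrel, sum_const_zero, sum_ite_mem,
    univ_inter]
  exact sum_congr rfl fun i _ => sum_congr rfl fun j _ => by split_ifs <;> rfl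

theorem indicator_dotProduct_lapMatrix_mulVec_indicator {n : ℕ} (G : SimpleGraph (Fin n))
    [DecidableRel G.Adj] (U : Finset (Fin n)) :
    (U : Set (Fin n)).indicator 1 ⬝ᵥ G.lapMatrix ℝ *ᵥ (U : Set (Fin n)).indicator 1
      = edgeBoundary G U := by
  rw [dotProduct_comm, dotProduct_indicator_one, edgeBoundary_eq_sum_card_sdiff, Nat.cast_sum]
  refine sum_congr rfl fun i hi => ?_
  simp only [G.lapMatrix_mulVec_apply, Set.indicator_apply, mem_coe, hi, Pi.one_apply,
    sum_boole, if_true, mul_one, filter_mem_eq_inter]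
  rw [← G.card_neighborFinset_eq_degree, ← card_sdiff_add_card_inter (G.neighborFinset i) U]
  push_cast
  ring

theorem stmt17_general (n : ℕ) (G : SimpleGraph (Fin n)) [DecidableRel G.Adj]
    (hL : (G.lapMatrix ℝ).IsHermitian)
    (lam : Fin n → ℝ) (σ : Equiv.Perm (Fin n))
    (hlam : lam = hL.eigenvalues ∘ σ)
    (hlamAnti : ∀ i j : Fin n, i ≤ j → lam j ≤ lam i)
    (d : Fin n → ℝ) (τ : Equiv.Perm (Fin n))
    (hd : d = (fun v => (G.degree v : ℝ)) ∘ τ)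
    (iG : ℝ)
    (hiG : IsLeast {x : ℝ | ∃ U : Finset (Fin n), 0 < U.card ∧ 2 * U.card ≤ n ∧
      x = (edgeBoundary G U : ℝ) / (U.card : ℝ)} iG) :
    ∀ m : ℕ, n ≤ 2 * m → m < n →
      iG ≤ ∑ i ∈ Finset.filter (fun i : Fin n => (i : ℕ) < m) Finset.univ,
        (lam i - d i) := by
  intro m hnm hmn
  subst hlam hd
  set T := (univ.filter fun i : Fin n => (i : ℕ) < m)ᶜ
  set C := T.map τ.toEmbedding
  have hC : #C = n - m := by rw [card_map, Fin.card_compl_filter_val_lt hmn.le]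
  have hCne : C.Nonempty := card_pos.1 (by omega)
  have hcut : iG ≤ edgeBoundary G C / #C := hiG.2 ⟨C, by omega, by omega, rfl⟩
  have hfan := hL.sum_smallest_eigenvalues_le_trace_mul σ hlamAnti
    (dotProduct_boundaryTestMatrix_mulVec_nonneg C) (dotProduct_boundaryTestMatrix_mulVec_le hCne)
    hmn (by rw [trace_boundaryTestMatrix hCne, hC])
  rw [trace_lapMatrix_mul_boundaryTestMatrix, indicator_dotProduct_lapMatrix_mulVec_indicator,
    sum_map] at hfan
  have htotal : ∑ i, hL.eigenvalues (σ i) = ∑ i, (G.degree (τ i) : ℝ) := by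
    rw [Equiv.sum_comp σ hL.eigenvalues, Equiv.sum_comp τ (fun v => (G.degree v : ℝ)),
      ← G.trace_lapMatrix, hL.trace_eq_sum_eigenvalues]
    simp
  have hlam := sum_add_sum_compl (univ.filter fun i : Fin n => (i : ℕ) < m)
    fun i => hL.eigenvalues (σ i)
  have hdeg := sum_add_sum_compl (univ.filter fun i : Fin n => (i : ℕ) < m)
    fun i => (G.degree (τ i) : ℝ)
  simp only [sum_sub_distrib, Function.comp_apply, Equiv.coe_toEmbedding] at hfan ⊢
  linarith

/-- The isoperimetric number `i(G) = min { |∂(U,Ū)|/|U| : 0 < |U| ≤ n/2 }`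
satisfies `i(G) ≤ ∑_{i≤m} (λᵢ - dᵢ)` for every `m` with `n/2 ≤ m < n`. -/
theorem stmt17 (n : ℕ) (G : SimpleGraph (Fin n)) [DecidableRel G.Adj]
    (hconn : G.Connected)
    (hL : (G.lapMatrix ℝ).IsHermitian)
    (lam : Fin n → ℝ) (σ : Equiv.Perm (Fin n))
    (hlam : lam = hL.eigenvalues ∘ σ)
    (hlamAnti : ∀ i j : Fin n, i ≤ j → lam j ≤ lam i)
    (d : Fin n → ℝ) (τ : Equiv.Perm (Fin n))
    (hd : d = (fun v => (G.degree v : ℝ)) ∘ τ)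
    (hdAnti : ∀ i j : Fin n, i ≤ j → d j ≤ d i)
    (iG : ℝ)
    (hiG : IsLeast {x : ℝ | ∃ U : Finset (Fin n), 0 < U.card ∧ 2 * U.card ≤ n ∧
      x = (edgeBoundary G U : ℝ) / (U.card : ℝ)} iG) :
    ∀ m : ℕ, n ≤ 2 * m → m < n →
      iG ≤ ∑ i ∈ Finset.filter (fun i : Fin n => (i : ℕ) < m) Finset.univ,
        (lam i - d i) :=
  stmt17_general n G hL lam σ hlam hlamAnti d τ hd iG hiG
end
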